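/- arXiv:2505.00428 — 8 statements merged into one kernel-verified Lean document; each statement's English description precedes it below -/
import Mathlib

section
/- Let V : (0,1) → [0,∞) be measurable and define K(r,r') = -√(V(r))·√(r·r')·log(max{r,r'})·√(V(r')). Then K is a positive definite kernel on (0,1)×(0,1), i.e. for every N ∈ ℕ, all r₁,…,r_N ∈ (0,1) and all x₁,…,x_N ∈ ℝ, ∑_{j,k=1}^N x_j x_k K(r_j, r_k) ≥ 0. -/
theorem min_kernel_pd {ι : Type*} [DecidableEq ι] :
    ∀ (n : ℕ) (S : Finset ι), S.card = n → ∀ (a s : ι → ℝ),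
      (∀ i ∈ S, 0 ≤ s i) →
      0 ≤ ∑ j ∈ S, ∑ k ∈ S, a j * a k * min (s j) (s k) := by
  intro n
  induction n with
  | zero =>
    intro S hS a s _
    rw [Finset.card_eq_zero.mp hS]
    simp
  | succ n ih =>
    intro S hS a s hs
    have hne : S.Nonempty := Finset.card_pos.mp (by omega)
    obtain ⟨m, hmS, hmin⟩ := S.exists_min_image s hne
    have key : ∀ j ∈ S, ∀ k ∈ S,
        a j * a k * min (s j) (s k)
          = a j * a k * s m + a j * a k * min (s j - s m) (s k - s m) := by
      intro j hj k hk
      have : min (s j) (s k) = s m + min (s j - s m) (s k - s m) := by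
        rcases min_cases (s j - s m) (s k - s m) with ⟨h1, h2⟩ | ⟨h1, h2⟩ <;>
          rcases min_cases (s j) (s k) with ⟨g1, g2⟩ | ⟨g1, g2⟩ <;> linarith
      rw [this]; ring
    rw [Finset.sum_congr rfl fun j hj =>
      Finset.sum_congr rfl fun k hk => key j hj k hk]
    rw [Finset.sum_congr rfl fun j (hj : j ∈ S) => Finset.sum_add_distrib,
      Finset.sum_add_distrib]
    have h1 : 0 ≤ ∑ j ∈ S, ∑ k ∈ S, a j * a k * s m := by
      have : ∑ j ∈ S, ∑ k ∈ S, a j * a k * s m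
          = (∑ j ∈ S, a j) ^ 2 * s m := by
        rw [sq, Finset.sum_mul_sum, Finset.sum_mul]
        exact Finset.sum_congr rfl fun j _ => by rw [Finset.sum_mul]
      rw [this]
      exact mul_nonneg (sq_nonneg _) (hs m hmS)
    have h2 : 0 ≤ ∑ j ∈ S, ∑ k ∈ S, a j * a k * min (s j - s m) (s k - s m) := by
      set t : ι → ℝ := fun i => s i - s m with ht
      have htnn : ∀ i ∈ S, 0 ≤ t i := fun i hi => sub_nonneg.mpr (hmin i hi)
      have htm : t m = 0 := sub_self _
      have inner_eq : ∀ j ∈ S.erase m,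
          ∑ k ∈ S, a j * a k * min (t j) (t k)
            = ∑ k ∈ S.erase m, a j * a k * min (t j) (t k) := by
        intro j hj
        rw [← Finset.add_sum_erase S _ hmS]
        have : min (t j) (t m) = 0 := by
          rw [htm]
          exact min_eq_right (htnn j (Finset.mem_of_mem_erase hj))
        rw [this, mul_zero, zero_add]
      calc (0:ℝ) ≤ ∑ j ∈ S.erase m, ∑ k ∈ S.erase m, a j * a k * min (t j) (t k) := by
            apply ih (S.erase m) (by rw [Finset.card_erase_of_mem hmS, hS]; rfl)
            exact fun i hi => htnn i (Finset.mem_of_mem_erase hi)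
        _ = ∑ j ∈ S, ∑ k ∈ S, a j * a k * min (t j) (t k) := by
            rw [← Finset.sum_congr rfl inner_eq]
            rw [← Finset.add_sum_erase S _ hmS]
            have : ∑ k ∈ S, a m * a k * min (t m) (t k) = 0 := by
              apply Finset.sum_eq_zero
              intro k hk
              have : min (t m) (t k) = 0 := by
                rw [htm]
                exact min_eq_left (htnn k hk)
              rw [this, mul_zero]
            rw [this, zero_add]
    linarith

theorem stmt_2 (V : ℝ → ℝ) (hV : ∀ r, 0 ≤ V r)
    (N : ℕ) (r : Fin N → ℝ) (hr : ∀ j, r j ∈ Set.Ioo (0 : ℝ) 1) (x : Fin N → ℝ) :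
    0 ≤ ∑ j, ∑ k, x j * x k *
      (-(Real.sqrt (V (r j)) * Real.sqrt (r j * r k) *
          Real.log (max (r j) (r k)) * Real.sqrt (V (r k)))) := by
  set a : Fin N → ℝ := fun j => x j * (Real.sqrt (V (r j)) * Real.sqrt (r j)) with ha
  set s : Fin N → ℝ := fun j => -Real.log (r j) with hsdef
  have hs : ∀ j, 0 ≤ s j := fun j =>
    neg_nonneg.mpr (Real.log_nonpos (hr j).1.le (hr j).2.le)
  have key : ∀ j k, x j * x k *
      (-(Real.sqrt (V (r j)) * Real.sqrt (r j * r k) *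
          Real.log (max (r j) (r k)) * Real.sqrt (V (r k))))
      = a j * a k * min (s j) (s k) := by
    intro j k
    have hsqrt : Real.sqrt (r j * r k) = Real.sqrt (r j) * Real.sqrt (r k) :=
      Real.sqrt_mul (hr j).1.le _
    have hlog : Real.log (max (r j) (r k)) = max (Real.log (r j)) (Real.log (r k)) := by
      rcases le_total (r j) (r k) with h | h
      · rw [max_eq_right h, max_eq_right (Real.log_le_log (hr _).1 h)]
      · rw [max_eq_left h, max_eq_left (Real.log_le_log (hr _).1 h)]
    have hmin : min (s j) (s k) = -max (Real.log (r j)) (Real.log (r k)) := by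
      simp [hsdef, min_neg_neg]
    rw [hsqrt, hlog, hmin, ha]
    ring
  rw [Finset.sum_congr rfl fun j _ => Finset.sum_congr rfl fun k _ => key j k]
  exact min_kernel_pd N Finset.univ (by simp) a s fun i _ => hs i
end

section
/- Let α > 0 and V : (0,∞) → [0,∞). Define K(r,r') = √(V(r))·(√(r·r')/(2α))·(min{r/r', r'/r})^α·√(V(r')). Then K is a positive definite kernel on (0,∞)×(0,∞): for every N ∈ ℕ, all r₁,…,r_N > 0 and all x₁,…,x_N ∈ ℝ, ∑_{j,k=1}^N x_j x_k K(r_j, r_k) ≥ 0. -/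
open MeasureTheory Set

private lemma prod_eq_aux (α : ℝ) (a b A B : ℝ) :
    (fun u : ℝ => (Set.Ioc (0:ℝ) a).indicator (fun u => A * u ^ (α - 1/2)) u *
      (Set.Ioc (0:ℝ) b).indicator (fun u => B * u ^ (α - 1/2)) u)
    = (Set.Ioc (0:ℝ) (min a b)).indicator (fun u => A * B * u ^ (2*α - 1)) := by
  funext u
  simp only [Set.indicator_apply, Set.mem_Ioc, le_min_iff]
  by_cases hu : 0 < u
  · by_cases hua : u ≤ a
    · by_cases hub : u ≤ b
      · simp only [hu, hua, hub, and_self, if_true, true_and]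
        have h : u ^ (α - 1/2) * u ^ (α - 1/2) = u ^ (2*α - 1) := by
          rw [← Real.rpow_add hu]; ring_nf
        calc A * u ^ (α - 1/2) * (B * u ^ (α - 1/2))
            = A * B * (u ^ (α - 1/2) * u ^ (α - 1/2)) := by ring
          _ = A * B * u ^ (2*α - 1) := by rw [h]
      · simp [hu, hua, hub]
    · simp [hu, hua]
  · simp [hu]

private lemma aux_int (α : ℝ) (hα : 0 < α) (a b A B : ℝ) (ha : 0 < a) (hb : 0 < b) :
    MeasureTheory.Integrable (fun u : ℝ =>
      (Set.Ioc (0:ℝ) a).indicator (fun u => A * u ^ (α - 1/2)) u *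
      (Set.Ioc (0:ℝ) b).indicator (fun u => B * u ^ (α - 1/2)) u) := by
  rw [prod_eq_aux]
  rw [MeasureTheory.integrable_indicator_iff measurableSet_Ioc]
  have h : IntervalIntegrable (fun u : ℝ => u ^ (2*α - 1)) volume 0 (min a b) :=
    intervalIntegral.intervalIntegrable_rpow' (by linarith)
  exact (h.1).const_mul (A * B)

private lemma aux_eq (α : ℝ) (hα : 0 < α) (a b A B : ℝ) (ha : 0 < a) (hb : 0 < b) :
    ∫ u : ℝ, (Set.Ioc (0:ℝ) a).indicator (fun u => A * u ^ (α - 1/2)) u *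
      (Set.Ioc (0:ℝ) b).indicator (fun u => B * u ^ (α - 1/2)) u
    = A * B * (min a b) ^ (2*α) / (2*α) := by
  have hm : (0:ℝ) < min a b := lt_min ha hb
  rw [prod_eq_aux, MeasureTheory.integral_indicator measurableSet_Ioc,
    ← intervalIntegral.integral_of_le hm.le, intervalIntegral.integral_const_mul,
    integral_rpow (Or.inl (by linarith : (-1:ℝ) < 2*α - 1))]
  rw [Real.zero_rpow (by linarith : (2*α - 1 + 1) ≠ 0)]
  ring_nf

private lemma ratio_eq_half (α a b : ℝ) (ha : 0 < a) (hb : 0 < b) (hab : a ≤ b) :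
    Real.sqrt (a*b) * (min (a/b) (b/a)) ^ α
    = a ^ ((1:ℝ)/2 - α) * b ^ ((1:ℝ)/2 - α) * (min a b) ^ (2*α) := by
  have h1 : min (a/b) (b/a) = a/b := by
    apply min_eq_left
    rw [div_le_div_iff₀ hb ha]
    nlinarith
  have h2 : min a b = a := min_eq_left hab
  rw [h1, h2, Real.sqrt_eq_rpow, Real.mul_rpow ha.le hb.le,
    Real.div_rpow ha.le hb.le]
  rw [div_eq_mul_inv (a ^ α), ← Real.rpow_neg hb.le]
  calc a ^ (1/2:ℝ) * b ^ (1/2:ℝ) * (a ^ α * b ^ (-α))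
      = (a ^ (1/2:ℝ) * a ^ α) * (b ^ (1/2:ℝ) * b ^ (-α)) := by ring
    _ = a ^ ((1:ℝ)/2 + α) * b ^ ((1:ℝ)/2 + -α) := by
        rw [← Real.rpow_add ha, ← Real.rpow_add hb]
    _ = (a ^ ((1:ℝ)/2 - α) * a ^ (2*α)) * b ^ ((1:ℝ)/2 - α) := by
        rw [← Real.rpow_add ha]; ring_nf
    _ = a ^ ((1:ℝ)/2 - α) * b ^ ((1:ℝ)/2 - α) * a ^ (2*α) := by ring

private lemma ratio_eq (α a b : ℝ) (ha : 0 < a) (hb : 0 < b) :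
    Real.sqrt (a*b) * (min (a/b) (b/a)) ^ α
    = a ^ ((1:ℝ)/2 - α) * b ^ ((1:ℝ)/2 - α) * (min a b) ^ (2*α) := by
  rcases le_total a b with h | h
  · exact ratio_eq_half α a b ha hb h
  · have := ratio_eq_half α b a hb ha h
    rw [mul_comm b a, min_comm (b/a) (a/b), min_comm b a] at this
    rw [this]; ring

theorem stmt_3 (α : ℝ) (hα : 0 < α) (V : ℝ → ℝ) (hV : ∀ r, 0 ≤ V r)
    (N : ℕ) (r : Fin N → ℝ) (hr : ∀ j, 0 < r j) (x : Fin N → ℝ) :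
    0 ≤ ∑ j, ∑ k, x j * x k *
      (Real.sqrt (V (r j)) * (Real.sqrt (r j * r k) / (2 * α)) *
        (min (r j / r k) (r k / r j)) ^ α * Real.sqrt (V (r k))) := by
  set A : Fin N → ℝ := fun j => x j * Real.sqrt (V (r j)) * (r j) ^ ((1:ℝ)/2 - α) with hA
  set g : Fin N → ℝ → ℝ :=
    fun j => (Set.Ioc (0:ℝ) (r j)).indicator (fun u => A j * u ^ (α - 1/2)) with hg
  have hint : ∀ j k, MeasureTheory.Integrable (fun u => g j u * g k u) := fun j k =>
    aux_int α hα (r j) (r k) (A j) (A k) (hr j) (hr k)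
  have hterm : ∀ j k : Fin N, x j * x k *
      (Real.sqrt (V (r j)) * (Real.sqrt (r j * r k) / (2 * α)) *
        (min (r j / r k) (r k / r j)) ^ α * Real.sqrt (V (r k)))
      = ∫ u : ℝ, g j u * g k u := by
    intro j k
    rw [hg]
    rw [aux_eq α hα (r j) (r k) (A j) (A k) (hr j) (hr k)]
    have h1 := ratio_eq α (r j) (r k) (hr j) (hr k)
    have h2 : x j * x k *
        (Real.sqrt (V (r j)) * (Real.sqrt (r j * r k) / (2 * α)) *
          (min (r j / r k) (r k / r j)) ^ α * Real.sqrt (V (r k)))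
        = (x j * Real.sqrt (V (r j))) * (x k * Real.sqrt (V (r k))) *
          (Real.sqrt (r j * r k) * (min (r j / r k) (r k / r j)) ^ α) / (2*α) := by
      ring
    rw [h2, h1, hA]
    ring
  calc (0:ℝ) ≤ ∫ u : ℝ, (∑ j, g j u)^2 :=
        MeasureTheory.integral_nonneg (fun u => sq_nonneg _)
    _ = ∫ u : ℝ, ∑ j, ∑ k, g j u * g k u := by
        congr 1; funext u
        rw [sq, Finset.sum_mul_sum]
    _ = ∑ j, ∫ u : ℝ, ∑ k, g j u * g k u := by
        rw [MeasureTheory.integral_finset_sum]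
        intro j _
        exact MeasureTheory.integrable_finset_sum _ (fun k _ => hint j k)
    _ = ∑ j, ∑ k, ∫ u : ℝ, g j u * g k u := by
        refine Finset.sum_congr rfl (fun j _ => ?_)
        exact MeasureTheory.integral_finset_sum _ (fun k _ => hint j k)
    _ = ∑ j, ∑ k, x j * x k *
      (Real.sqrt (V (r j)) * (Real.sqrt (r j * r k) / (2 * α)) *
        (min (r j / r k) (r k / r j)) ^ α * Real.sqrt (V (r k))) := by
        refine Finset.sum_congr rfl (fun j _ => Finset.sum_congr rfl (fun k _ => ?_))
        rw [hterm j k]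
end

section
/- Let α ∈ ℝ, α ≥ 0, and m ∈ ℤ with m < 0. Then for every smooth compactly supported function φ on (0,∞), ∫₀^∞ (1+r)^{-2α}·|φ'(r) - (m/r)φ(r)|²·r dr ≥ ∫₀^∞ (1+r)^{-2α}·(|φ'(r)|² + (m²/r²)|φ(r)|²)·r dr. -/
open MeasureTheory Set

private lemma normsq_helper (z : ℂ) : ‖z‖ ^ 2 = z.re ^ 2 + z.im ^ 2 := by
  rw [Complex.sq_norm, Complex.normSq_apply]; ring

theorem stmt_8 (α : ℝ) (hα : 0 ≤ α) (m : ℤ) (hm : m < 0)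
    (φ : ℝ → ℂ) (hφ : ContDiff ℝ (⊤ : ℕ∞) φ) (hsupp : HasCompactSupport φ)
    (hsupp' : tsupport φ ⊆ Ioi (0 : ℝ)) :
    ∫ r in Ioi (0 : ℝ),
        (1 + r) ^ (-2 * α) * ‖deriv φ r - ((m : ℂ) / (r : ℂ)) * φ r‖ ^ 2 * r ≥
      ∫ r in Ioi (0 : ℝ),
        (1 + r) ^ (-2 * α) * (‖deriv φ r‖ ^ 2 + ((m : ℝ) ^ 2 / r ^ 2) * ‖φ r‖ ^ 2) * r := by
  classical
  -- notation
  set F : ℝ → ℝ := fun r => (1 + r) ^ (-2 * α) * ‖deriv φ r - ((m : ℂ) / (r : ℂ)) * φ r‖ ^ 2 * r with hF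
  set G : ℝ → ℝ := fun r => (1 + r) ^ (-2 * α) * (‖deriv φ r‖ ^ 2 + ((m : ℝ) ^ 2 / r ^ 2) * ‖φ r‖ ^ 2) * r with hG
  -- find a, b with 0 < a, tsupport φ ⊆ Ioo a b
  obtain ⟨a, b, ha, hab, hK⟩ : ∃ a b : ℝ, 0 < a ∧ a < b ∧ tsupport φ ⊆ Ioo a b := by
    rcases eq_empty_or_nonempty (tsupport φ) with h | h
    · exact ⟨1, 2, one_pos, one_lt_two, by simp [h]⟩
    · have hc : IsCompact (tsupport φ) := hsupp
      have h1 := hc.sInf_mem h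
      have h2 := hc.sSup_mem h
      refine ⟨sInf (tsupport φ) / 2, sSup (tsupport φ) + 1, ?_, ?_, ?_⟩
      · have := hsupp' h1; simp only [mem_Ioi] at this; linarith
      · have := hsupp' h1
        have h3 : sInf (tsupport φ) ≤ sSup (tsupport φ) :=
          csInf_le_csSup h hc.bddBelow hc.bddAbove
        simp only [mem_Ioi] at this; linarith
      · intro x hx
        have hl : sInf (tsupport φ) ≤ x := csInf_le hc.bddBelow hx
        have hu : x ≤ sSup (tsupport φ) := le_csSup hc.bddAbove hx
        have := hsupp' h1; simp only [mem_Ioi] at this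
        exact ⟨by linarith, by linarith⟩
  -- vanishing outside Ioo a b
  have hφ0 : ∀ r : ℝ, r ∉ Ioo a b → φ r = 0 := fun r hr =>
    image_eq_zero_of_notMem_tsupport (fun h => hr (hK h))
  have hd0 : ∀ r : ℝ, r ∉ Ioo a b → deriv φ r = 0 := by
    intro r hr
    by_contra h
    exact hr (hK (support_deriv_subset (Function.mem_support.2 h)))
  have hF0 : ∀ r : ℝ, r ∉ Ioo a b → F r = 0 := by
    intro r hr; simp [hF, hφ0 r hr, hd0 r hr]
  have hG0 : ∀ r : ℝ, r ∉ Ioo a b → G r = 0 := by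
    intro r hr; simp [hG, hφ0 r hr, hd0 r hr]
  -- reduce to interval integral
  have hsub : Ioc a b ⊆ Ioi (0 : ℝ) := fun x hx => lt_trans ha hx.1
  have hredF : ∫ r in Ioi (0 : ℝ), F r = ∫ r in a..b, F r := by
    rw [MeasureTheory.setIntegral_eq_of_subset_of_forall_diff_eq_zero measurableSet_Ioi hsub
      (fun x hx => hF0 x (fun hx2 => hx.2 (Ioo_subset_Ioc_self hx2)))]
    rw [intervalIntegral.integral_of_le hab.le]
  have hredG : ∫ r in Ioi (0 : ℝ), G r = ∫ r in a..b, G r := by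
    rw [MeasureTheory.setIntegral_eq_of_subset_of_forall_diff_eq_zero measurableSet_Ioi hsub
      (fun x hx => hG0 x (fun hx2 => hx.2 (Ioo_subset_Ioc_self hx2)))]
    rw [intervalIntegral.integral_of_le hab.le]
  rw [ge_iff_le, hredF, hredG]
  -- auxiliary functions
  set W : ℝ → ℝ := fun r => (1 + r) ^ (-2 * α) with hW
  set W' : ℝ → ℝ := fun r => (-2 * α) * (1 + r) ^ (-2 * α - 1) with hW'
  set u : ℝ → ℝ := fun r => ‖φ r‖ ^ 2 with hu
  set u' : ℝ → ℝ := fun r => 2 * ((starRingEnd ℂ) (φ r) * deriv φ r).re with hu'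
  have hdiffφ : Differentiable ℝ φ := hφ.differentiable (by simp)
  have hcderiv : Continuous (deriv φ) := hφ.continuous_deriv (by simp)
  have huIcc : uIcc a b = Icc a b := uIcc_of_le hab.le
  -- derivative of W * u
  have hWd : ∀ r ∈ uIcc a b, HasDerivAt (fun r => W r * u r) (W' r * u r + W r * u' r) r := by
    intro r hr
    rw [huIcc] at hr
    have h1r : (0:ℝ) < 1 + r := by linarith [hr.1, ha]
    have hWda : HasDerivAt W (W' r) r := by
      have := (Real.hasDerivAt_rpow_const (x := 1 + r) (p := -2 * α) (Or.inl h1r.ne')).comp r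
        ((hasDerivAt_id r).const_add 1)
      simpa [hW, hW', mul_comm, Function.comp_def] using this
    have huda : HasDerivAt u (u' r) r := by
      have h1 : HasDerivAt (fun s => (φ s).re) ((deriv φ r).re) r := by
        simpa [Function.comp_def] using (Complex.reCLM.hasFDerivAt.comp_hasDerivAt r (hdiffφ r).hasDerivAt)
      have h2 : HasDerivAt (fun s => (φ s).im) ((deriv φ r).im) r := by
        simpa [Function.comp_def] using (Complex.imCLM.hasFDerivAt.comp_hasDerivAt r (hdiffφ r).hasDerivAt)
      have : HasDerivAt (fun s => (φ s).re ^ 2 + (φ s).im ^ 2)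
          (2 * (φ r).re * (deriv φ r).re + 2 * (φ r).im * (deriv φ r).im) r := by
        have := ((h1.pow 2).add (h2.pow 2))
        simpa [mul_comm, mul_assoc, mul_left_comm, Pi.add_def, Pi.pow_def] using this
      have heq : u = fun s => (φ s).re ^ 2 + (φ s).im ^ 2 := by
        funext s; exact normsq_helper (φ s)
      rw [heq]
      convert this using 1
      simp [hu', Complex.mul_re]
      ring
    exact hWda.mul huda
  -- continuity facts on [a,b]
  have hWc : ContinuousOn W (uIcc a b) := by
    intro r hr
    rw [huIcc] at hr
    have h1r : (0:ℝ) < 1 + r := by linarith [hr.1, ha]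
    exact ((Real.continuousAt_rpow_const _ _ (Or.inl h1r.ne')).comp
      (by fun_prop : ContinuousAt (fun r : ℝ => 1 + r) r)).continuousWithinAt
  have hW'c : ContinuousOn W' (uIcc a b) := by
    intro r hr
    rw [huIcc] at hr
    have h1r : (0:ℝ) < 1 + r := by linarith [hr.1, ha]
    exact (((Real.continuousAt_rpow_const _ _ (Or.inl h1r.ne')).comp
      (by fun_prop : ContinuousAt (fun r : ℝ => 1 + r) r)).const_smul (-2*α)).continuousWithinAt
  have huc : Continuous u := by fun_prop
  have hu'c : Continuous u' := by
    apply Continuous.mul continuous_const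
    exact Complex.continuous_re.comp ((Complex.continuous_conj.comp hφ.continuous).mul hcderiv)
  have hiW'u : IntervalIntegrable (fun r => W' r * u r) volume a b :=
    (hW'c.mul huc.continuousOn).intervalIntegrable
  have hiWu' : IntervalIntegrable (fun r => W r * u' r) volume a b :=
    (hWc.mul hu'c.continuousOn).intervalIntegrable
  -- integration by parts: ∫ (W'u + Wu') = 0
  have hparts : (∫ r in a..b, (W' r * u r + W r * u' r)) = 0 := by
    rw [intervalIntegral.integral_eq_sub_of_hasDerivAt hWd (hiW'u.add hiWu')]
    have hua : u a = 0 := by simp [hu, hφ0 a (by simp [lt_irrefl])]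
    have hub : u b = 0 := by simp [hu, hφ0 b (by simp [lt_irrefl])]
    simp [hua, hub]
  have hWu' : (∫ r in a..b, W r * u' r) = - ∫ r in a..b, W' r * u r := by
    have := intervalIntegral.integral_add hiW'u hiWu'
    rw [hparts] at this
    linarith [this]
  -- pointwise identity on uIcc
  have hFG : ∀ r ∈ uIcc a b, F r = G r + (-(m:ℝ)) * (W r * u' r) := by
    intro r hr
    rw [huIcc] at hr
    have hr0 : (0:ℝ) < r := lt_of_lt_of_le ha hr.1
    have key : ‖deriv φ r - ((m : ℂ) / (r : ℂ)) * φ r‖ ^ 2 =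
        ‖deriv φ r‖ ^ 2 + ((m : ℝ) ^ 2 / r ^ 2) * ‖φ r‖ ^ 2
          - (2 * (m:ℝ) / r) * ((starRingEnd ℂ) (φ r) * deriv φ r).re := by
      simp only [normsq_helper, Complex.sub_re, Complex.sub_im, Complex.mul_re, Complex.mul_im,
        Complex.div_re, Complex.div_im, Complex.intCast_re, Complex.intCast_im,
        Complex.ofReal_re, Complex.ofReal_im, Complex.normSq_apply, Complex.conj_re,
        Complex.conj_im]
      field_simp
      ring
    simp only [hF, hG, hW, hu']
    rw [key]
    field_simp
    ring
  -- continuity of G on [a,b]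
  have hGc : ContinuousOn G (uIcc a b) := by
    rw [huIcc]
    have hWc' : ContinuousOn W (Icc a b) := by rwa [huIcc] at hWc
    apply ContinuousOn.mul
    apply hWc'.mul
    · apply ContinuousOn.add
      · exact ((hcderiv.norm.pow 2)).continuousOn
      · apply ContinuousOn.mul
        · apply ContinuousOn.div continuousOn_const (by fun_prop)
          intro x hx
          exact pow_ne_zero _ (ne_of_gt (lt_of_lt_of_le ha hx.1))
        · exact ((hφ.continuous.norm.pow 2)).continuousOn
    · exact continuousOn_id
  have hiG : IntervalIntegrable G volume a b := hGc.intervalIntegrable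
  have hsplit : (∫ r in a..b, F r) =
      (∫ r in a..b, G r) + (-(m:ℝ)) * ∫ r in a..b, W r * u' r := by
    rw [← intervalIntegral.integral_const_mul, ← intervalIntegral.integral_add hiG
      (hiWu'.const_mul _)]
    exact intervalIntegral.integral_congr hFG
  have hpos : 0 ≤ ∫ r in a..b, (m:ℝ) * (W' r * u r) := by
    apply intervalIntegral.integral_nonneg hab.le
    intro x hx
    have h1x : (0:ℝ) ≤ 1 + x := by have := hx.1; linarith
    have hW'le : W' x ≤ 0 := by
      have : (0:ℝ) ≤ (1 + x) ^ (-2 * α - 1) := Real.rpow_nonneg h1x _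
      simp only [hW']
      nlinarith
    have hux : 0 ≤ u x := by simp only [hu]; positivity
    have hm' : (m:ℝ) ≤ 0 := by exact_mod_cast hm.le
    have hWu : W' x * u x ≤ 0 := mul_nonpos_iff.2 (Or.inr ⟨hW'le, hux⟩)
    nlinarith [mul_nonneg (neg_nonneg.2 hm') (neg_nonneg.2 hWu)]
  rw [hsplit, hWu']
  have hpos' : 0 ≤ (m:ℝ) * ∫ r in a..b, W' r * u r := by
    rwa [intervalIntegral.integral_const_mul] at hpos
  linarith
end

section
/- Let α ∈ ℝ, α ≥ 0, and m ∈ ℤ with m < 0. Then for every smooth compactly supported function φ on (0,∞), ∫₀^∞ (1+r)^{2α}·|φ'(r) + (m/r)φ(r)|²·r dr ≥ ∫₀^∞ (1+r)^{2α}·(|φ'(r)|² + (m²/r²)|φ(r)|²)·r dr. -/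
open MeasureTheory Set

private lemma aux_intOn (f : ℝ → ℝ) (hf : ContinuousOn f (Ioi 0))
    {δ R : ℝ} (hδ : 0 < δ) (h0 : ∀ r ∈ Ioi (0:ℝ), r ∉ Icc δ R → f r = 0) :
    IntegrableOn f (Ioi 0) := by
  have hsub : Icc δ R ⊆ Ioi (0:ℝ) := fun x hx => lt_of_lt_of_le hδ hx.1
  have h1 : IntegrableOn f (Icc δ R) :=
    (hf.mono hsub).integrableOn_compact isCompact_Icc
  have h2 : IntegrableOn f (Ioi 0 \ Icc δ R) := by
    have he : EqOn f (fun _ => (0:ℝ)) (Ioi 0 \ Icc δ R) := fun x hx => h0 x hx.1 hx.2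
    exact (integrableOn_congr_fun he (measurableSet_Ioi.diff measurableSet_Icc)).mpr
      integrableOn_zero
  exact (h1.union h2).mono_set
    (fun x hx => by by_cases h : x ∈ Icc δ R <;> [exact Or.inl h; exact Or.inr ⟨hx, h⟩])

theorem stmt_9 (α : ℝ) (hα : 0 ≤ α) (m : ℤ) (hm : m < 0)
    (φ : ℝ → ℂ) (hφ : ContDiff ℝ (⊤ : ℕ∞) φ) (hsupp : HasCompactSupport φ)
    (hsupp' : tsupport φ ⊆ Ioi (0 : ℝ)) :
    ∫ r in Ioi (0 : ℝ),
        (1 + r) ^ (2 * α) * ‖deriv φ r + ((m : ℂ) / (r : ℂ)) * φ r‖ ^ 2 * r ≥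
      ∫ r in Ioi (0 : ℝ),
        (1 + r) ^ (2 * α) * (‖deriv φ r‖ ^ 2 + ((m : ℝ) ^ 2 / r ^ 2) * ‖φ r‖ ^ 2) * r := by
  obtain ⟨δ, R, hδ, hK⟩ : ∃ δ R : ℝ, 0 < δ ∧ tsupport φ ⊆ Icc δ R := by
    rcases eq_empty_or_nonempty (tsupport φ) with h | h
    · exact ⟨1, 0, one_pos, by simp [h]⟩
    · have hc : IsCompact (tsupport φ) := hsupp
      exact ⟨sInf (tsupport φ), sSup (tsupport φ), hsupp' (hc.sInf_mem h),
        fun x hx => ⟨csInf_le hc.bddBelow hx, le_csSup hc.bddAbove hx⟩⟩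
  have hφ0 : ∀ r, r ∉ Icc δ R → φ r = 0 ∧ deriv φ r = 0 := by
    intro r hr
    have hrt : r ∉ tsupport φ := fun h => hr (hK h)
    have he : φ =ᶠ[nhds r] 0 := notMem_tsupport_iff_eventuallyEq.mp hrt
    exact ⟨image_eq_zero_of_notMem_tsupport hrt, by rw [he.deriv_eq]; exact deriv_const r 0⟩
  set ψ : ℝ → ℝ := fun r => ‖φ r‖^2 with hψdef
  set dψ : ℝ → ℝ := fun r => 2*((φ r).re*(deriv φ r).re + (φ r).im*(deriv φ r).im) with hdψdef
  have hψd : ∀ r, HasDerivAt ψ (dψ r) r := by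
    intro r
    have hd : HasDerivAt φ (deriv φ r) r := (hφ.differentiable (by simp) r).hasDerivAt
    have hre : HasDerivAt (fun r => (φ r).re) ((deriv φ r).re) r :=
      Complex.reCLM.hasFDerivAt.comp_hasDerivAt r hd
    have him : HasDerivAt (fun r => (φ r).im) ((deriv φ r).im) r :=
      Complex.imCLM.hasFDerivAt.comp_hasDerivAt r hd
    have key : ψ = fun r => (φ r).re^2 + (φ r).im^2 := by
      funext x
      show ‖φ x‖^2 = _
      rw [Complex.sq_norm, Complex.normSq_apply]; ring
    rw [key]
    have := (hre.mul hre).add (him.mul him)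
    refine (this.congr_deriv ?_).congr_of_eventuallyEq
      (Filter.Eventually.of_forall fun r => ?_)
    · rw [hdψdef]; ring
    · simp only [Pi.add_apply, Pi.mul_apply]; ring
  have hcψ : Continuous ψ := (hφ.continuous.norm).pow 2
  have hcd : Continuous (deriv φ) := hφ.continuous_deriv (by simp)
  have hcdψ : Continuous dψ := by
    apply Continuous.mul continuous_const
    exact ((Complex.continuous_re.comp hφ.continuous).mul
        (Complex.continuous_re.comp hcd)).add
      ((Complex.continuous_im.comp hφ.continuous).mul (Complex.continuous_im.comp hcd))
  have hpc : ∀ β : ℝ, ContinuousOn (fun r:ℝ => (1+r)^β) (Ioi 0) := by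
    intro β r hr
    have h1r : (0:ℝ) < 1 + r := by have := mem_Ioi.mp hr; linarith
    exact ((Real.continuousAt_rpow_const _ _ (Or.inl h1r.ne')).comp
      ((continuous_const.add continuous_id).continuousAt)).continuousWithinAt
  set F : ℝ → ℝ := fun r => (1+r)^(2*α) * ψ r with hFdef
  set D : ℝ → ℝ := fun r => 2*α*(1+r)^(2*α-1) * ψ r + (1+r)^(2*α) * dψ r with hDdef
  have hFd : ∀ r ∈ Ici (0:ℝ), HasDerivAt F (D r) r := by
    intro r hr
    have h1r : (0:ℝ) < 1 + r := by have := mem_Ici.mp hr; linarith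
    have hp : HasDerivAt (fun r : ℝ => (1+r)^(2*α)) (2*α*(1+r)^(2*α-1)) r := by
      have h := (Real.hasDerivAt_rpow_const (x := 1+r) (p := 2*α) (Or.inl h1r.ne')).comp r
        ((hasDerivAt_id r).const_add 1)
      rw [mul_one] at h
      exact h
    exact hp.mul (hψd r)
  -- integrability of the various pieces
  have hg1int : IntegrableOn (fun r => 2*α*(1+r)^(2*α-1) * ψ r) (Ioi 0) := by
    apply aux_intOn (R := R) _ (((continuousOn_const.mul (hpc (2*α-1)))).mul hcψ.continuousOn) hδ
    intro r _ hr
    simp [hψdef, (hφ0 r hr).1]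
  have hg2int : IntegrableOn (fun r => (1+r)^(2*α) * dψ r) (Ioi 0) := by
    apply aux_intOn (R := R) _ ((hpc (2*α)).mul hcdψ.continuousOn) hδ
    intro r _ hr
    simp [hdψdef, (hφ0 r hr).1, (hφ0 r hr).2]
  have hDint : IntegrableOn D (Ioi 0) := hg1int.add hg2int
  have hFtend : Filter.Tendsto F Filter.atTop (nhds 0) := by
    have he : F =ᶠ[Filter.atTop] (fun _ => (0:ℝ)) := by
      filter_upwards [Filter.eventually_gt_atTop R] with r hr
      have : r ∉ Icc δ R := fun h => absurd h.2 (not_le.mpr hr)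
      simp [hFdef, hψdef, (hφ0 r this).1]
    exact Filter.Tendsto.congr' he.symm tendsto_const_nhds
  have hIBP : ∫ r in Ioi (0:ℝ), D r = 0 - F 0 :=
    integral_Ioi_of_hasDerivAt_of_tendsto' hFd hDint hFtend
  have hF0 : F 0 = 0 := by
    have h0 : (0:ℝ) ∉ Icc δ R := fun h => absurd h.1 (not_le.mpr hδ)
    simp [hFdef, hψdef, (hφ0 0 h0).1]
  have hDzero : ∫ r in Ioi (0:ℝ), D r = 0 := by rw [hIBP, hF0]; ring
  have hsplit : ∫ r in Ioi (0:ℝ), D r =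
      (∫ r in Ioi (0:ℝ), 2*α*(1+r)^(2*α-1) * ψ r) +
      (∫ r in Ioi (0:ℝ), (1+r)^(2*α) * dψ r) := integral_add hg1int hg2int
  have hg1nonneg : 0 ≤ ∫ r in Ioi (0:ℝ), 2*α*(1+r)^(2*α-1) * ψ r := by
    apply setIntegral_nonneg measurableSet_Ioi
    intro r hr
    have h1r : (0:ℝ) ≤ 1 + r := by have := mem_Ioi.mp hr; linarith
    have := Real.rpow_nonneg h1r (2*α-1)
    have hψnn : 0 ≤ ψ r := by rw [hψdef]; positivity
    exact mul_nonneg (mul_nonneg (by linarith) this) hψnn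
  have hg2nonpos : ∫ r in Ioi (0:ℝ), (1+r)^(2*α) * dψ r ≤ 0 := by
    rw [hDzero] at hsplit; linarith
  -- pointwise identity
  have hpt : EqOn
      (fun r => (1 + r) ^ (2 * α) * ‖deriv φ r + ((m : ℂ) / (r : ℂ)) * φ r‖ ^ 2 * r)
      (fun r => (1 + r) ^ (2 * α) * (‖deriv φ r‖ ^ 2 + ((m : ℝ) ^ 2 / r ^ 2) * ‖φ r‖ ^ 2) * r
        + (m:ℝ) * ((1+r)^(2*α) * dψ r)) (Ioi 0) := by
    intro r hr
    have hr0 : (0:ℝ) < r := mem_Ioi.mp hr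
    set z := φ r
    set c := deriv φ r
    have hnorm : ∀ w : ℂ, ‖w‖^2 = w.re^2 + w.im^2 := fun w => by
      rw [Complex.sq_norm, Complex.normSq_apply]; ring
    have hcast : ((m:ℂ)/(r:ℂ)) = (((m:ℝ)/r : ℝ) : ℂ) := by push_cast; ring
    simp only [hdψdef]
    rw [hcast, hnorm, hnorm, hnorm]
    simp only [Complex.add_re, Complex.add_im, Complex.mul_re, Complex.mul_im,
      Complex.ofReal_re, Complex.ofReal_im]
    field_simp
    ring
  have hRHSint : IntegrableOn
      (fun r => (1 + r) ^ (2 * α) * (‖deriv φ r‖ ^ 2 + ((m : ℝ) ^ 2 / r ^ 2) * ‖φ r‖ ^ 2) * r)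
      (Ioi 0) := by
    apply aux_intOn (R := R) _ ?_ hδ
    · intro r _ hr
      simp [(hφ0 r hr).1, (hφ0 r hr).2]
    · apply ContinuousOn.mul ?_ continuousOn_id
      apply (hpc (2*α)).mul
      apply ContinuousOn.add (hcd.norm.pow 2).continuousOn
      apply ContinuousOn.mul ?_ (hφ.continuous.norm.pow 2).continuousOn
      exact continuousOn_const.div (continuous_pow 2).continuousOn
        (fun r hr => pow_ne_zero 2 (ne_of_gt (mem_Ioi.mp hr)))
  have hCint : IntegrableOn (fun r => (m:ℝ) * ((1+r)^(2*α) * dψ r)) (Ioi 0) :=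
    hg2int.const_mul _
  calc ∫ r in Ioi (0:ℝ),
        (1 + r) ^ (2 * α) * ‖deriv φ r + ((m : ℂ) / (r : ℂ)) * φ r‖ ^ 2 * r
      = ∫ r in Ioi (0:ℝ),
        ((1 + r) ^ (2 * α) * (‖deriv φ r‖ ^ 2 + ((m : ℝ) ^ 2 / r ^ 2) * ‖φ r‖ ^ 2) * r
          + (m:ℝ) * ((1+r)^(2*α) * dψ r)) := setIntegral_congr_fun measurableSet_Ioi hpt
    _ = (∫ r in Ioi (0:ℝ),
          (1 + r) ^ (2 * α) * (‖deriv φ r‖ ^ 2 + ((m : ℝ) ^ 2 / r ^ 2) * ‖φ r‖ ^ 2) * r)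
        + ∫ r in Ioi (0:ℝ), (m:ℝ) * ((1+r)^(2*α) * dψ r) := integral_add hRHSint hCint
    _ ≥ ∫ r in Ioi (0:ℝ),
          (1 + r) ^ (2 * α) * (‖deriv φ r‖ ^ 2 + ((m : ℝ) ^ 2 / r ^ 2) * ‖φ r‖ ^ 2) * r := by
      have : 0 ≤ ∫ r in Ioi (0:ℝ), (m:ℝ) * ((1+r)^(2*α) * dψ r) := by
        rw [integral_const_mul]
        have hm' : (m:ℝ) ≤ 0 := by exact_mod_cast hm.le
        nlinarith
      linarith
end

section
/- Let α > 0, let m ∈ ℤ with m > α, and let g be a smooth compactly supported function on (0,∞). Then ∫₀^∞ (1+r)^{-2α}·r^{2m+1}·|g'(r)|² dr ≥ c(α)·(m-α)²·∫₀^∞ (1+r)^{-2α}·r^{2m-1}·|g(r)|² dr for a constant c(α) > 0 depending only on α. -/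
open MeasureTheory Set

theorem stmt_13 (α : ℝ) (hα : 0 < α) :
    ∃ c > (0 : ℝ), ∀ m : ℤ, α < (m : ℝ) →
      ∀ g : ℝ → ℝ, ContDiff ℝ (⊤ : ℕ∞) g → HasCompactSupport g → tsupport g ⊆ Ioi (0 : ℝ) →
        ∫ r in Ioi (0 : ℝ), (1 + r) ^ (-2 * α) * r ^ (2 * m + 1 : ℤ) * (deriv g r) ^ 2 ≥
          c * ((m : ℝ) - α) ^ 2 *
            ∫ r in Ioi (0 : ℝ), (1 + r) ^ (-2 * α) * r ^ (2 * m - 1 : ℤ) * (g r) ^ 2 := by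
  refine ⟨1, one_pos, ?_⟩
  intro m hm g hg hgc hgs
  set s : ℝ := (m : ℝ) - α with hs_def
  have hs : 0 < s := by simp [hs_def]; linarith
  -- the support is contained in some Icc a b with 0 < a
  obtain ⟨a, b, ha, hab, hKab⟩ :
      ∃ a b : ℝ, 0 < a ∧ a ≤ b ∧ tsupport g ⊆ Icc a b := by
    rcases (tsupport g).eq_empty_or_nonempty with h | h
    · exact ⟨1, 2, one_pos, by norm_num, by simp [h]⟩
    · have hK : IsCompact (tsupport g) := hgc
      refine ⟨sInf (tsupport g), sSup (tsupport g), hgs (hK.sInf_mem h), ?_, ?_⟩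
      · exact Real.sInf_le_sSup _ hK.bddBelow hK.bddAbove
      · exact fun x hx => ⟨csInf_le hK.bddBelow hx, le_csSup hK.bddAbove hx⟩
  set aa : ℝ := a / 2 with haa_def
  set bb : ℝ := b + 1 with hbb_def
  have haa : 0 < aa := by positivity
  have haabb : aa ≤ bb := by
    simp only [haa_def, hbb_def]; linarith
  have hnotK : ∀ x : ℝ, x ∉ Icc aa bb → x ∉ tsupport g := by
    intro x hx hxK
    exact hx ⟨by linarith [(hKab hxK).1], by linarith [(hKab hxK).2]⟩
  have hg0 : ∀ x : ℝ, x ∉ Icc aa bb → g x = 0 := fun x hx =>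
    image_eq_zero_of_notMem_tsupport (hnotK x hx)
  have hg0' : ∀ x : ℝ, x ∉ Icc aa bb → deriv g x = 0 := fun x hx =>
    Function.notMem_support.mp (fun hc => hnotK x hx (support_deriv_subset hc))
  have hgd : ∀ x : ℝ, HasDerivAt g (deriv g x) x := fun x =>
    ((hg.differentiable (by simp)) x).hasDerivAt
  have hIccIoi : Icc aa bb ⊆ Ioi (0 : ℝ) := fun x hx => lt_of_lt_of_le haa hx.1
  -- the functions
  set u : ℝ → ℝ := fun r => (1 + r) ^ (-2 * α) * r ^ (2 * m + 1 : ℤ) * (deriv g r) ^ 2 with hu_def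
  set w : ℝ → ℝ := fun r => (1 + r) ^ (-2 * α) * r ^ (2 * m - 1 : ℤ) * (g r) ^ 2 with hw_def
  set F : ℝ → ℝ := fun r => r ^ (2 * m : ℤ) * (1 + r) ^ (-2 * α) * (g r) ^ 2 with hF_def
  set f' : ℝ → ℝ := fun r =>
      (2 * (m : ℝ) * r ^ (2 * m - 1 : ℤ) * (1 + r) ^ (-2 * α)
        + (-2 * α) * (1 + r) ^ (-2 * α - 1) * r ^ (2 * m : ℤ)) * (g r) ^ 2
      + r ^ (2 * m : ℤ) * (1 + r) ^ (-2 * α) * (2 * g r * deriv g r) with hf'_def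
  -- derivative of F
  have hFderiv : ∀ r ∈ Icc aa bb, HasDerivAt F (f' r) r := by
    intro r hr
    have hr0 : 0 < r := hIccIoi hr
    have h1r : 0 < 1 + r := by linarith
    have hz : HasDerivAt (fun x : ℝ => x ^ (2 * m : ℤ))
        (((2 * m : ℤ) : ℝ) * r ^ (2 * m - 1 : ℤ)) r :=
      hasDerivAt_zpow (2 * m) r (Or.inl hr0.ne')
    have hp : HasDerivAt (fun x : ℝ => (1 + x) ^ (-2 * α))
        (1 * (-2 * α) * (1 + r) ^ (-2 * α - 1)) r :=
      ((hasDerivAt_id r).const_add 1).rpow_const (Or.inl h1r.ne')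
    have hsq : HasDerivAt (fun x : ℝ => (g x) ^ 2)
        ((2 : ℕ) * g r ^ (2 - 1) * deriv g r) r := (hgd r).pow 2
    have := (hz.fun_mul hp).fun_mul hsq
    refine this.congr_deriv ?_
    simp only [hf'_def]
    push_cast
    ring
  -- continuity tools
  have hderivg_cont : Continuous (deriv g) := hg.continuous_deriv (by simp)
  have hcontP : ∀ β : ℝ, ContinuousOn (fun r : ℝ => (1 + r) ^ β) (Icc aa bb) := by
    intro β
    apply ContinuousOn.rpow_const
    · exact (continuous_const.add continuous_id).continuousOn
    · intro x hx
      have : 0 < 1 + x := by have := hIccIoi hx; simp at this; linarith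
      exact Or.inl this.ne'
  have hcontz : ∀ k : ℤ, ContinuousOn (fun r : ℝ => r ^ k) (Icc aa bb) := by
    intro k x hx
    exact (continuousAt_zpow₀ x k (Or.inl (hIccIoi hx).ne')).continuousWithinAt
  -- integrability of u, w, f'
  have hu_eq : u = (Icc aa bb).indicator u := by
    funext x
    by_cases hx : x ∈ Icc aa bb
    · rw [indicator_of_mem hx]
    · rw [indicator_of_notMem hx]
      simp [hu_def, hg0' x hx]
  have hw_eq : w = (Icc aa bb).indicator w := by
    funext x
    by_cases hx : x ∈ Icc aa bb
    · rw [indicator_of_mem hx]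
    · rw [indicator_of_notMem hx]
      simp [hw_def, hg0 x hx]
  have hf'_eq : f' = (Icc aa bb).indicator f' := by
    funext x
    by_cases hx : x ∈ Icc aa bb
    · rw [indicator_of_mem hx]
    · rw [indicator_of_notMem hx]
      simp [hf'_def, hg0 x hx, hg0' x hx]
  have hu_contOn : ContinuousOn u (Icc aa bb) := by
    exact (((hcontP _).mul (hcontz _)).mul ((hderivg_cont.pow 2).continuousOn))
  have hw_contOn : ContinuousOn w (Icc aa bb) := by
    exact (((hcontP _).mul (hcontz _)).mul ((hg.continuous.pow 2).continuousOn))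
  have hf'_contOn : ContinuousOn f' (Icc aa bb) := by
    apply ContinuousOn.add
    · exact (((continuousOn_const.mul (hcontz _)).mul (hcontP _)).add
        ((continuousOn_const.mul (hcontP _)).mul (hcontz _))).mul
        ((hg.continuous.pow 2).continuousOn)
    · exact ((hcontz _).mul (hcontP _)).mul
        ((continuous_const.mul hg.continuous).mul hderivg_cont).continuousOn
  have hu_int : Integrable u := by
    rw [hu_eq]
    exact (integrable_indicator_iff measurableSet_Icc).2
      (hu_contOn.integrableOn_compact isCompact_Icc)
  have hw_int : Integrable w := by
    rw [hw_eq]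
    exact (integrable_indicator_iff measurableSet_Icc).2
      (hw_contOn.integrableOn_compact isCompact_Icc)
  have hf'_int : Integrable f' := by
    rw [hf'_eq]
    exact (integrable_indicator_iff measurableSet_Icc).2
      (hf'_contOn.integrableOn_compact isCompact_Icc)
  -- the integral of f' over Ioi 0 vanishes
  have hF'zero : ∫ r in Ioi (0 : ℝ), f' r = 0 := by
    have h1 : ∫ r in Ioi (0 : ℝ), f' r = ∫ r in Ioi (0 : ℝ), (Icc aa bb).indicator f' r := by
      conv_lhs => rw [hf'_eq]
    have h2 : ∫ r in Ioi (0 : ℝ), (Icc aa bb).indicator f' r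
        = ∫ r in Ioi (0 : ℝ) ∩ Icc aa bb, f' r := setIntegral_indicator measurableSet_Icc
    have h3 : Ioi (0 : ℝ) ∩ Icc aa bb = Icc aa bb := inter_eq_self_of_subset_right hIccIoi
    have h4 : ∫ r in Icc aa bb, f' r = ∫ r in Ioc aa bb, f' r := integral_Icc_eq_integral_Ioc
    have h5 : ∫ r in Ioc aa bb, f' r = ∫ r in aa..bb, f' r :=
      (intervalIntegral.integral_of_le haabb).symm
    have h6 : ∫ r in aa..bb, f' r = F bb - F aa := by
      apply intervalIntegral.integral_eq_sub_of_hasDerivAt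
      · intro x hx
        rw [uIcc_of_le haabb] at hx
        exact hFderiv x hx
      · apply ContinuousOn.intervalIntegrable
        rwa [uIcc_of_le haabb]
    have hFaa : F aa = 0 := by
      have hgaa : g aa = 0 := image_eq_zero_of_notMem_tsupport
        (fun hc => by have := (hKab hc).1; simp only [haa_def] at this; linarith)
      simp [hF_def, hgaa]
    have hFbb : F bb = 0 := by
      have hgbb : g bb = 0 := image_eq_zero_of_notMem_tsupport
        (fun hc => by have := (hKab hc).2; simp only [hbb_def] at this; linarith)
      simp [hF_def, hgbb]
    rw [h1, h2, h3, h4, h5, h6, hFaa, hFbb, sub_zero]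
  -- the pointwise inequality
  have key : ∀ r ∈ Ioi (0 : ℝ), s ^ 2 * w r - u r ≤ s * f' r := by
    intro r hr
    have hr0 : 0 < r := hr
    have h1r : 0 < 1 + r := by linarith
    have hρ : 0 < r ^ (2 * m - 1 : ℤ) := zpow_pos hr0 _
    have hQ : 0 < (1 + r) ^ (-2 * α - 1) := Real.rpow_pos_of_pos h1r _
    have hP : (1 + r) ^ (-2 * α) = (1 + r) ^ (-2 * α - 1) * (1 + r) := by
      rw [← Real.rpow_add_one h1r.ne' (-2 * α - 1)]
      congr 1; ring
    have hr2m : r ^ (2 * m : ℤ) = r ^ (2 * m - 1 : ℤ) * r := by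
      rw [← zpow_add_one₀ hr0.ne' (2 * m - 1)]
      congr 1; ring
    have hr2m1 : r ^ (2 * m + 1 : ℤ) = r ^ (2 * m - 1 : ℤ) * r * r := by
      rw [← zpow_add_one₀ hr0.ne' (2 * m - 1), ← zpow_add_one₀ hr0.ne' (2 * m - 1 + 1)]
      congr 1; ring
    simp only [hu_def, hw_def, hf'_def, hP, hr2m, hr2m1]
    rw [show ((m : ℝ)) = s + α by rw [hs_def]; ring]
    nlinarith [mul_nonneg (mul_nonneg (mul_pos hQ hρ).le h1r.le)
        (sq_nonneg (s * g r + r * deriv g r)),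
      mul_nonneg (mul_nonneg (mul_nonneg hs.le hα.le) (mul_pos hQ hρ).le) (sq_nonneg (g r)),
      hr0, h1r, hs, hα]
  -- integrate the pointwise inequality
  have hmono : ∫ r in Ioi (0 : ℝ), (s ^ 2 * w r - u r) ≤ ∫ r in Ioi (0 : ℝ), s * f' r := by
    apply setIntegral_mono_on
    · exact ((hw_int.const_mul _).sub hu_int).integrableOn
    · exact (hf'_int.const_mul s).integrableOn
    · exact measurableSet_Ioi
    · exact key
  have hlhs : ∫ r in Ioi (0 : ℝ), (s ^ 2 * w r - u r)
      = s ^ 2 * (∫ r in Ioi (0 : ℝ), w r) - ∫ r in Ioi (0 : ℝ), u r := by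
    rw [integral_sub ((hw_int.const_mul _).integrableOn) hu_int.integrableOn,
      integral_const_mul]
  have hrhs : ∫ r in Ioi (0 : ℝ), s * f' r = 0 := by
    rw [integral_const_mul, hF'zero, mul_zero]
  rw [hlhs, hrhs] at hmono
  have : (1 : ℝ) * s ^ 2 * ∫ r in Ioi (0 : ℝ), w r ≤ ∫ r in Ioi (0 : ℝ), u r := by linarith
  exact this
end

section
/- Let α > 0 and let V : (0,∞) → [0,∞) be measurable with ∫₀^∞ V(r)·r dr < ∞. Then the number of negative eigenvalues of the one-dimensional Schrödinger operator -d²/dr² + (α² - 1/4)·r^{-2} - V on L²(0,∞) (with Dirichlet-type boundary condition at 0) is at most (2α)⁻¹·∫₀^∞ V(r)·r dr. -/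
open MeasureTheory Set

/-- Cauchy–Schwarz for integrals of real functions. -/
lemma my_integral_cs {μ : Measure ℝ} {f g : ℝ → ℝ} (hf : Integrable (fun x => f x ^ 2) μ)
    (hg : Integrable (fun x => g x ^ 2) μ) (hfg : Integrable (fun x => f x * g x) μ) :
    (∫ x, f x * g x ∂μ) ^ 2 ≤ (∫ x, f x ^ 2 ∂μ) * ∫ x, g x ^ 2 ∂μ := by
  have key : ∀ t : ℝ, 0 ≤ (∫ x, f x ^ 2 ∂μ) * (t * t) + (2 * ∫ x, f x * g x ∂μ) * t +
      ∫ x, g x ^ 2 ∂μ := by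
    intro t
    have h2 : 0 ≤ ∫ x, (t * f x + g x) ^ 2 ∂μ := integral_nonneg fun x => sq_nonneg _
    have h1 : (fun x => (t * f x + g x) ^ 2)
        = fun x => ((t * t) * f x ^ 2 + (2 * t) * (f x * g x)) + g x ^ 2 := by
      funext x; ring
    have hA : Integrable (fun x => (t * t) * f x ^ 2 + (2 * t) * (f x * g x)) μ :=
      (hf.const_mul (t * t)).add (hfg.const_mul (2 * t))
    rw [h1, integral_add hA hg, integral_add (hf.const_mul (t * t)) (hfg.const_mul (2 * t)),
      integral_const_mul, integral_const_mul] at h2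
    nlinarith
  have h := discrim_le_zero key
  rw [discrim] at h
  nlinarith

/-- A compact subset of `(0,∞)` is contained in some `[a,b]` with `a > 0`. -/
lemma my_compact_bounds {K : Set ℝ} (hK : IsCompact K) (hsub : K ⊆ Ioi 0) :
    ∃ a b : ℝ, 0 < a ∧ K ⊆ Icc a b := by
  rcases K.eq_empty_or_nonempty with h | h
  · exact ⟨1, 0, one_pos, by simp [h]⟩
  · refine ⟨sInf K, sSup K, hsub (hK.sInf_mem h), fun x hx => ⟨?_, ?_⟩⟩
    · exact csInf_le hK.isBounded.bddBelow hx
    · exact le_csSup hK.isBounded.bddAbove hx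

/-- Integrability on `(0,∞)` of a function continuous there and vanishing off `[a,b]`, `a>0`. -/
lemma my_integrableOn {f : ℝ → ℝ} {a b : ℝ} (ha : 0 < a)
    (hf : ContinuousOn f (Ioi 0))
    (h0 : ∀ x ∈ Ioi (0:ℝ), x ∉ Icc a b → f x = 0) :
    IntegrableOn f (Ioi (0:ℝ)) := by
  have hIcc : Icc a b ⊆ Ioi (0:ℝ) := fun x hx => lt_of_lt_of_le ha hx.1
  have h1 : IntegrableOn f (Icc a b) := (hf.mono hIcc).integrableOn_Icc
  exact h1.of_forall_diff_eq_zero measurableSet_Ioi fun x hx => h0 x hx.1 hx.2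

section core
variable {α : ℝ} {u : ℝ → ℝ} {a b : ℝ}

/-- vanishing of u off the support box -/
lemma my_u0 (hsupp : tsupport u ⊆ Icc a b) {x : ℝ} (hx : x ∉ Icc a b) : u x = 0 :=
  image_eq_zero_of_notMem_tsupport fun h => hx (hsupp h)

lemma my_du0 (hsupp : tsupport u ⊆ Icc a b) {x : ℝ} (hx : x ∉ Icc a b) : deriv u x = 0 := by
  have hev : u =ᶠ[nhds x] (fun _ => 0) := by
    filter_upwards [isClosed_Icc.isOpen_compl.mem_nhds hx] with y hy
    exact my_u0 hsupp hy
  rw [hev.deriv_eq]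
  exact deriv_const x 0

lemma my_cont_derivu (hu : ContDiff ℝ (⊤ : ℕ∞) u) : Continuous (deriv u) :=
  hu.continuous_deriv (by simp)

end core

section core2
variable {α : ℝ} {u : ℝ → ℝ} {a b : ℝ}

lemma my_contOn_psi (hu : ContDiff ℝ (⊤ : ℕ∞) u) :
    ContinuousOn (fun s => deriv u s - (1/2 - α) * u s / s) (Ioi (0:ℝ)) := by
  apply ContinuousOn.sub (my_cont_derivu hu).continuousOn
  exact ContinuousOn.div (continuousOn_const.mul hu.continuous.continuousOn)
    continuousOn_id (fun x hx => ne_of_gt hx)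

lemma my_int_psi2 (hα : 0 < α) (hu : ContDiff ℝ (⊤ : ℕ∞) u) (ha : 0 < a)
    (hsupp : tsupport u ⊆ Icc a b) :
    IntegrableOn (fun s => (deriv u s - (1/2 - α) * u s / s) ^ 2) (Ioi (0:ℝ)) := by
  apply my_integrableOn (b := b) ha ((my_contOn_psi hu).pow 2)
  intro x _ hx
  simp [my_u0 hsupp hx, my_du0 hsupp hx]

lemma my_int_f1 (hα : 0 < α) (hu : ContDiff ℝ (⊤ : ℕ∞) u) (ha : 0 < a)
    (hsupp : tsupport u ⊆ Icc a b) :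
    IntegrableOn (fun r => deriv u r ^ 2 + (α^2 - 1/4)/r^2 * u r ^ 2) (Ioi (0:ℝ)) := by
  apply my_integrableOn (b := b) ha
  · apply ContinuousOn.add ((my_cont_derivu hu).continuousOn.pow 2)
    apply ContinuousOn.mul
    · exact ContinuousOn.div continuousOn_const (continuousOn_pow 2)
        (fun x hx => pow_ne_zero 2 (ne_of_gt hx))
    · exact (hu.continuous.continuousOn).pow 2
  · intro x _ hx
    simp [my_u0 hsupp hx, my_du0 hsupp hx]

lemma my_int_W (hα : 0 < α) (hu : ContDiff ℝ (⊤ : ℕ∞) u) (ha : 0 < a)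
    (hsupp : tsupport u ⊆ Icc a b) :
    IntegrableOn (fun r => 2 * u r * deriv u r / r - u r ^ 2 / r ^ 2) (Ioi (0:ℝ)) := by
  apply my_integrableOn (b := b) ha
  · apply ContinuousOn.sub
    · exact ContinuousOn.div ((continuousOn_const.mul hu.continuous.continuousOn).mul
        (my_cont_derivu hu).continuousOn) continuousOn_id (fun x hx => ne_of_gt hx)
    · exact ContinuousOn.div ((hu.continuous.continuousOn).pow 2) (continuousOn_pow 2)
        (fun x hx => pow_ne_zero 2 (ne_of_gt hx))
  · intro x _ hx
    simp [my_u0 hsupp hx, my_du0 hsupp hx]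

/-- ∫ W = 0 -/
lemma my_intW_zero (hα : 0 < α) (hu : ContDiff ℝ (⊤ : ℕ∞) u) (ha : 0 < a)
    (hsupp : tsupport u ⊆ Icc a b) :
    ∫ r in Ioi (0:ℝ), (2 * u r * deriv u r / r - u r ^ 2 / r ^ 2) = 0 := by
  have hw0 : ∀ x : ℝ, x < a → u x = 0 := fun x hx =>
    my_u0 hsupp (fun h => absurd h.1 (not_le.mpr hx))
  have hder : ∀ x ∈ Ioi (0:ℝ), HasDerivAt (fun s => u s ^ 2 / s)
      (2 * u x * deriv u x / x - u x ^ 2 / x ^ 2) x := by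
    intro x hx
    have hx0 : x ≠ 0 := ne_of_gt hx
    have h1 : HasDerivAt (fun s => u s ^ 2) (2 * u x * deriv u x) x := by
      have := ((hu.differentiable (by simp) x).hasDerivAt).fun_pow 2
      simpa [mul_comm, mul_assoc, mul_left_comm] using this
    have h2 : HasDerivAt (fun s : ℝ => s⁻¹) (-(x^2)⁻¹) x := hasDerivAt_inv hx0
    have := h1.fun_mul h2
    have heq : (fun s => u s ^ 2 * s⁻¹) = fun s => u s ^ 2 / s := by
      funext s; rw [div_eq_mul_inv]
    rw [heq] at this
    exact this.congr_deriv (by ring)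
  have hcont : ContinuousWithinAt (fun s => u s ^ 2 / s) (Ici (0:ℝ)) 0 := by
    have : (fun s => u s ^ 2 / s) =ᶠ[nhdsWithin 0 (Ici (0:ℝ))] (fun _ => (0:ℝ)) := by
      filter_upwards [mem_nhdsWithin_of_mem_nhds (Iio_mem_nhds ha)] with y hy
      rw [hw0 y hy]; simp
    exact (continuousWithinAt_const (b := (0:ℝ))).congr_of_eventuallyEq this (by
      rw [hw0 0 ha]; simp)
  have htend : Filter.Tendsto (fun s => u s ^ 2 / s) Filter.atTop (nhds 0) := by
    apply Filter.Tendsto.congr' _ tendsto_const_nhds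
    filter_upwards [Filter.Ioi_mem_atTop b] with y hy
    rw [my_u0 hsupp (fun h => absurd h.2 (not_le.mpr hy))]; simp
  have := integral_Ioi_of_hasDerivAt_of_tendsto hcont hder
    (my_int_W hα hu ha hsupp) htend
  rw [this, hw0 0 ha]; simp

/-- Lemma A : the quadratic form identity -/
lemma my_lemA (hα : 0 < α) (hu : ContDiff ℝ (⊤ : ℕ∞) u) (ha : 0 < a)
    (hsupp : tsupport u ⊆ Icc a b) :
    ∫ r in Ioi (0:ℝ), (deriv u r ^ 2 + (α^2 - 1/4)/r^2 * u r ^ 2)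
      = ∫ r in Ioi (0:ℝ), (deriv u r - (1/2 - α) * u r / r) ^ 2 := by
  have hpt : ∀ r ∈ Ioi (0:ℝ), deriv u r ^ 2 + (α^2 - 1/4)/r^2 * u r ^ 2
      = (deriv u r - (1/2 - α) * u r / r) ^ 2
        + (1/2 - α) * (2 * u r * deriv u r / r - u r ^ 2 / r ^ 2) := by
    intro r hr
    have hr0 : r ≠ 0 := ne_of_gt hr
    field_simp
    ring
  calc ∫ r in Ioi (0:ℝ), (deriv u r ^ 2 + (α^2 - 1/4)/r^2 * u r ^ 2)
      = ∫ r in Ioi (0:ℝ), ((deriv u r - (1/2 - α) * u r / r) ^ 2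
        + (1/2 - α) * (2 * u r * deriv u r / r - u r ^ 2 / r ^ 2)) := by
        exact setIntegral_congr_fun measurableSet_Ioi hpt
    _ = (∫ r in Ioi (0:ℝ), (deriv u r - (1/2 - α) * u r / r) ^ 2)
        + (1/2 - α) * ∫ r in Ioi (0:ℝ), (2 * u r * deriv u r / r - u r ^ 2 / r ^ 2) := by
        rw [integral_add (my_int_psi2 hα hu ha hsupp)
          ((my_int_W hα hu ha hsupp).const_mul _), integral_const_mul]
    _ = _ := by rw [my_intW_zero hα hu ha hsupp]; ring

end core2
section core3
variable {α : ℝ} {u : ℝ → ℝ} {a b : ℝ}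

/-- Lemma B : pointwise bound -/
lemma my_lemB (hα : 0 < α) (hu : ContDiff ℝ (⊤ : ℕ∞) u) (ha : 0 < a)
    (hsupp : tsupport u ⊆ Icc a b) {r : ℝ} (hr : 0 < r) :
    u r ^ 2 ≤ r / (2 * α) * ∫ s in Ioi (0:ℝ), (deriv u s - (1/2 - α) * u s / s) ^ 2 := by
  have hInonneg : 0 ≤ ∫ s in Ioi (0:ℝ), (deriv u s - (1/2 - α) * u s / s) ^ 2 :=
    setIntegral_nonneg measurableSet_Ioi fun s _ => sq_nonneg _
  set I := ∫ s in Ioi (0:ℝ), (deriv u s - (1/2 - α) * u s / s) ^ 2 with hI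
  rcases lt_or_ge r a with hra | har
  · rw [my_u0 hsupp (fun h => absurd h.1 (not_le.mpr hra))]
    have : 0 ≤ r / (2*α) := by positivity
    nlinarith
  -- main case : a ≤ r
  set p : ℝ := α - 1/2 with hp
  set a' : ℝ := a / 2 with ha'
  have ha'0 : 0 < a' := by positivity
  have ha'r : a' ≤ r := le_trans (by linarith) har
  have hq : ∀ x ∈ uIcc a' r, HasDerivAt (fun s : ℝ => u s * s ^ p)
      ((deriv u x - (1/2 - α) * u x / x) * x ^ p) x := by
    intro x hx
    rw [uIcc_of_le ha'r] at hx
    have hx0 : 0 < x := lt_of_lt_of_le ha'0 hx.1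
    have h1 : HasDerivAt u (deriv u x) x := (hu.differentiable (by simp) x).hasDerivAt
    have h2 : HasDerivAt (fun s : ℝ => s ^ p) (p * x ^ (p - 1)) x :=
      Real.hasDerivAt_rpow_const (Or.inl (ne_of_gt hx0))
    refine (h1.fun_mul h2).congr_deriv ?_
    have hxp : x ^ (p - 1) = x ^ p / x ^ (1:ℝ) := Real.rpow_sub hx0 p 1
    rw [Real.rpow_one] at hxp
    rw [hxp]
    field_simp
    ring
  have hqint : IntervalIntegrable (fun x => (deriv u x - (1/2 - α) * u x / x) * x ^ p)
      volume a' r := by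
    apply ContinuousOn.intervalIntegrable
    rw [uIcc_of_le ha'r]
    have hsub : Icc a' r ⊆ Ioi (0:ℝ) := fun x hx => lt_of_lt_of_le ha'0 hx.1
    apply ContinuousOn.mul ((my_contOn_psi hu).mono hsub)
    intro x hx
    exact (Real.continuousAt_rpow_const x p (Or.inl (ne_of_gt (hsub hx)))).continuousWithinAt
  have hftc := intervalIntegral.integral_eq_sub_of_hasDerivAt hq hqint
  have hqa' : u a' * a' ^ p = 0 := by
    rw [my_u0 hsupp (fun h => absurd h.1 (not_le.mpr (by linarith)))]; ring
  rw [hqa', sub_zero] at hftc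
  -- convert to set integral over Ioc
  rw [intervalIntegral.integral_of_le ha'r] at hftc
  -- Cauchy-Schwarz
  have hμ : ∀ {f : ℝ → ℝ}, ContinuousOn f (Icc a' r) → Integrable f (volume.restrict (Ioc a' r)) := by
    intro f hf
    exact (hf.integrableOn_Icc).mono_set Ioc_subset_Icc_self
  have hsub : Icc a' r ⊆ Ioi (0:ℝ) := fun x hx => lt_of_lt_of_le ha'0 hx.1
  have hcψ : ContinuousOn (fun s => deriv u s - (1/2 - α) * u s / s) (Icc a' r) :=
    (my_contOn_psi hu).mono hsub
  have hcp : ContinuousOn (fun s : ℝ => s ^ p) (Icc a' r) := fun x hx =>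
    (Real.continuousAt_rpow_const x p (Or.inl (ne_of_gt (hsub hx)))).continuousWithinAt
  have hcs := my_integral_cs (μ := volume.restrict (Ioc a' r))
    (f := fun s => deriv u s - (1/2 - α) * u s / s) (g := fun s : ℝ => s ^ p)
    (hμ (hcψ.pow 2)) (hμ (hcp.pow 2)) (hμ (hcψ.mul hcp))
  rw [hftc] at hcs
  -- bound the rpow integral
  have hrint : ∫ s in Ioc a' r, (s ^ p) ^ 2 = (r ^ (2*α) - a' ^ (2*α)) / (2*α) := by
    have hpt : ∀ s ∈ Ioc a' r, (s ^ p) ^ 2 = s ^ (2*α - 1) := by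
      intro s hs
      have hs0 : 0 < s := lt_trans ha'0 hs.1
      rw [sq, ← Real.rpow_add hs0]
      norm_num [hp]
      ring_nf
    rw [setIntegral_congr_fun measurableSet_Ioc hpt, ← intervalIntegral.integral_of_le ha'r]
    rw [integral_rpow (Or.inl (by linarith : (-1:ℝ) < 2*α - 1))]
    norm_num
  -- assemble
  have h2α : 0 < 2*α := by linarith
  have hA : 0 < (r ^ p) ^ 2 := pow_pos (Real.rpow_pos_of_pos hr p) 2
  have hApr : (r ^ p) ^ 2 * r = r ^ (2*α) := by
    have e1 : (r:ℝ) ^ p * r ^ p = r ^ (p + p) := (Real.rpow_add hr p p).symm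
    calc (r ^ p) ^ 2 * r = r ^ (p + p) * r ^ (1:ℝ) := by rw [sq, e1, Real.rpow_one]
    _ = r ^ (p + p + 1) := (Real.rpow_add hr _ _).symm
    _ = r ^ (2*α) := by congr 1; rw [hp]; ring
  have h1 : ∫ s in Ioc a' r, (deriv u s - (1/2 - α) * u s / s) ^ 2 ≤ I := by
    rw [hI]
    apply setIntegral_mono_set (my_int_psi2 hα hu ha hsupp)
    · exact Filter.Eventually.of_forall fun s => sq_nonneg _
    · exact HasSubset.Subset.eventuallyLE (fun x hx => lt_trans ha'0 hx.1)
  have h2 : ∫ s in Ioc a' r, (s ^ p) ^ 2 ≤ r ^ (2*α) / (2*α) := by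
    rw [hrint]
    have hnn := Real.rpow_nonneg (le_of_lt ha'0) (2*α)
    gcongr
    linarith
  have h2' : 0 ≤ ∫ s in Ioc a' r, (s ^ p) ^ 2 :=
    setIntegral_nonneg measurableSet_Ioc fun s _ => sq_nonneg _
  have key : u r ^ 2 * ((r ^ p) ^ 2) ≤ (r / (2*α) * I) * ((r ^ p) ^ 2) := by
    calc u r ^ 2 * ((r ^ p) ^ 2) = (u r * r ^ p) ^ 2 := by ring
    _ ≤ I * (r ^ (2*α) / (2*α)) := le_trans hcs (mul_le_mul h1 h2 h2' hInonneg)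
    _ = (r / (2*α) * I) * ((r ^ p) ^ 2) := by
        rw [← hApr]; field_simp
  exact le_of_mul_le_mul_right key hA
end core3
lemma my_integral_sum_mul_sum {N : ℕ} (ψ : Fin N → ℝ → ℝ) (c d : Fin N → ℝ)
    (hint : ∀ i k, IntegrableOn (fun s => ψ i s * ψ k s) (Ioi (0:ℝ))) :
    ∫ s in Ioi (0:ℝ), (∑ i, c i * ψ i s) * (∑ k, d k * ψ k s)
      = ∑ i, ∑ k, c i * d k * ∫ s in Ioi (0:ℝ), ψ i s * ψ k s := by
  have hpt : ∀ s : ℝ, (∑ i, c i * ψ i s) * (∑ k, d k * ψ k s)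
      = ∑ i, ∑ k, (c i * d k) * (ψ i s * ψ k s) := by
    intro s
    rw [Finset.sum_mul_sum]
    exact Finset.sum_congr rfl fun i _ => Finset.sum_congr rfl fun k _ => by ring
  simp_rw [hpt]
  rw [integral_finset_sum _ (fun i _ => integrable_finset_sum _
    (fun k _ => (hint i k).const_mul (c i * d k)))]
  apply Finset.sum_congr rfl
  intro i _
  rw [integral_finset_sum _ (fun k _ => (hint i k).const_mul (c i * d k))]
  exact Finset.sum_congr rfl fun k _ => integral_const_mul _ _

lemma my_vecswap {N : ℕ} (T : Matrix (Fin N) (Fin N) ℝ) (aa : Fin N → ℝ) (v : Fin N → ℝ) :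
    ∑ j, (∑ i, aa i * T i j) * v j = ∑ i, aa i * (∑ k, T i k * v k) := by
  calc ∑ j, (∑ i, aa i * T i j) * v j = ∑ j, ∑ i, aa i * (T i j * v j) := by
        refine Finset.sum_congr rfl fun j _ => ?_
        rw [Finset.sum_mul]
        exact Finset.sum_congr rfl fun i _ => by ring
    _ = ∑ i, ∑ j, aa i * (T i j * v j) := Finset.sum_comm
    _ = ∑ i, aa i * (∑ k, T i k * v k) := by
        refine Finset.sum_congr rfl fun i _ => ?_
        rw [Finset.mul_sum]
/-- The number of negative eigenvalues of `-d²/dr² + (α²-1/4)r⁻² - V` on `L²(0,∞)`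
(defined via its quadratic form with core `C_c^∞(0,∞)`) is at most
`(2α)⁻¹ ∫₀^∞ V(r) r dr`: by the variational principle this is expressed by saying
that any finite-dimensional space of test functions on which the quadratic form is
negative definite has dimension at most that bound. -/
theorem stmt_14 (α : ℝ) (hα : 0 < α) (V : ℝ → ℝ) (hVmeas : Measurable V)
    (hV0 : ∀ r ∈ Ioi (0 : ℝ), 0 ≤ V r)
    (hVint : IntegrableOn (fun r => V r * r) (Ioi (0 : ℝ))) :
    ∀ (N : ℕ) (φ : Fin N → ℝ → ℝ),
      (∀ j, ContDiff ℝ (⊤ : ℕ∞) (φ j)) → (∀ j, HasCompactSupport (φ j)) →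
      (∀ j, tsupport (φ j) ⊆ Ioi (0 : ℝ)) →
      LinearIndependent ℝ φ →
      (∀ c : Fin N → ℝ, c ≠ 0 →
        (∫ r in Ioi (0 : ℝ),
            ((deriv (fun t => ∑ j, c j * φ j t) r) ^ 2 +
              ((α ^ 2 - 1 / 4) / r ^ 2 - V r) * (∑ j, c j * φ j r) ^ 2)) < 0) →
      (N : ℝ) ≤ (2 * α)⁻¹ * ∫ r in Ioi (0 : ℝ), V r * r := by
  intro N φ hφsm hφcs hφsupp hφli hneg
  have h2α : (0:ℝ) < 2 * α := by linarith
  have hVrr : 0 ≤ ∫ r in Ioi (0:ℝ), V r * r :=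
    setIntegral_nonneg measurableSet_Ioi fun r hr => mul_nonneg (hV0 r hr) (le_of_lt hr)
  rcases Nat.eq_zero_or_pos N with hN | hN
  · subst hN
    simpa using mul_nonneg (inv_nonneg.mpr (le_of_lt h2α)) hVrr
  haveI : Nonempty (Fin N) := Fin.pos_iff_nonempty.mp hN
  obtain ⟨a, b, ha, hab⟩ : ∃ a b : ℝ, 0 < a ∧ (⋃ j, tsupport (φ j)) ⊆ Icc a b :=
    my_compact_bounds (isCompact_iUnion fun j => hφcs j) (iUnion_subset hφsupp)
  have hφab : ∀ j, tsupport (φ j) ⊆ Icc a b := fun j => (subset_iUnion _ j).trans hab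
  -- basic facts about linear combinations
  have hUsm : ∀ c : Fin N → ℝ, ContDiff ℝ (⊤ : ℕ∞) (fun t => ∑ j, c j * φ j t) :=
    fun c => ContDiff.sum fun j _ => contDiff_const.mul (hφsm j)
  have hUsupp : ∀ c : Fin N → ℝ, tsupport (fun t => ∑ j, c j * φ j t) ⊆ Icc a b := by
    intro c
    apply closure_minimal ?_ isClosed_Icc
    intro x hx
    by_contra hxn
    have hz : ∀ j, φ j x = 0 := fun j => my_u0 (hφab j) hxn
    exact hx (by simp [hz])
  have hDU : ∀ (c : Fin N → ℝ) (x : ℝ),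
      deriv (fun t => ∑ j, c j * φ j t) x = ∑ j, c j * deriv (φ j) x := by
    intro c x
    have h : HasDerivAt (fun t => ∑ j, c j * φ j t) (∑ j, c j * deriv (φ j) x) x := by
      apply HasDerivAt.fun_sum
      intro j _
      exact (((hφsm j).differentiable (by simp) x).hasDerivAt).const_mul (c j)
    exact h.deriv
  -- the transformed functions
  set ψ : Fin N → ℝ → ℝ := fun j s => deriv (φ j) s - (1/2 - α) * φ j s / s with hψdef
  have hΨlin : ∀ (c : Fin N → ℝ) (s : ℝ),
      deriv (fun t => ∑ j, c j * φ j t) s - (1/2 - α) * (∑ j, c j * φ j s) / s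
        = ∑ j, c j * ψ j s := by
    intro c s
    rw [hDU c s]
    simp only [hψdef]
    simp only [div_eq_mul_inv, mul_sub, Finset.sum_sub_distrib]
    congr 1
    rw [Finset.mul_sum, Finset.sum_mul]
    exact Finset.sum_congr rfl fun j _ => by ring
  have hψcont : ∀ j, ContinuousOn (ψ j) (Ioi (0:ℝ)) := fun j => my_contOn_psi (hφsm j)
  have hψ0 : ∀ (j) (x : ℝ), x ∉ Icc a b → ψ j x = 0 := fun j x hx => by
    simp [hψdef, my_u0 (hφab j) hx, my_du0 (hφab j) hx]
  have hψint : ∀ i j, IntegrableOn (fun s => ψ i s * ψ j s) (Ioi (0:ℝ)) := fun i j =>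
    my_integrableOn (b := b) ha ((hψcont i).mul (hψcont j))
      (fun x _ hx => by rw [hψ0 i x hx]; ring)
  -- the Gram matrix
  set M : Matrix (Fin N) (Fin N) ℝ :=
    Matrix.of fun i j => ∫ s in Ioi (0:ℝ), ψ i s * ψ j s with hMdef
  have hMapp : ∀ i j, M i j = ∫ s in Ioi (0:ℝ), ψ i s * ψ j s := fun i j => rfl
  have hbil : ∀ c d : Fin N → ℝ, ∫ s in Ioi (0:ℝ), (∑ j, c j * ψ j s) * (∑ k, d k * ψ k s)
      = ∑ j, ∑ k, c j * d k * M j k := fun c d => my_integral_sum_mul_sum ψ c d hψint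
  -- quadratic form identity
  have hquad : ∀ c : Fin N → ℝ, (∫ s in Ioi (0:ℝ),
      (deriv (fun t => ∑ j, c j * φ j t) s - (1/2 - α) * (∑ j, c j * φ j s) / s) ^ 2)
      = ∑ j, ∑ k, c j * c k * M j k := by
    intro c
    rw [← hbil c c]
    apply setIntegral_congr_fun measurableSet_Ioi
    intro s _
    beta_reduce
    rw [hΨlin c s, sq]
  -- V-integrability
  have hVu2 : ∀ c : Fin N → ℝ,
      IntegrableOn (fun r => V r * (∑ j, c j * φ j r) ^ 2) (Ioi (0:ℝ)) := by
    intro c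
    obtain ⟨C0, hC0⟩ := (isCompact_Icc (a := a) (b := b)).exists_bound_of_continuousOn
      (hUsm c).continuous.continuousOn
    set C : ℝ := max C0 0 with hC
    have hCnn : 0 ≤ C := le_max_right _ _
    have hbd : ∀ x : ℝ, (∑ j, c j * φ j x) ^ 2 ≤ C ^ 2 := by
      intro x
      by_cases hx : x ∈ Icc a b
      · have h1 := hC0 x hx
        have h2 : |∑ j, c j * φ j x| ≤ C := le_trans h1 (le_max_left _ _)
        nlinarith [abs_nonneg (∑ j, c j * φ j x), sq_abs (∑ j, c j * φ j x),
          abs_nonneg (∑ j, c j * φ j x)]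
      · have hz : ∀ j, φ j x = 0 := fun j => my_u0 (hφab j) hx
        simp [hz]
        positivity
    apply Integrable.mono' ((hVint.const_mul (C^2 / a)) :
        Integrable (fun r => C^2 / a * (V r * r)) (volume.restrict (Ioi 0)))
    · exact (hVmeas.mul (((hUsm c).continuous.pow 2).measurable)).aestronglyMeasurable
    · rw [ae_restrict_iff' measurableSet_Ioi]
      apply Filter.Eventually.of_forall
      intro r hr
      have hrpos : (0:ℝ) < r := hr
      have hVr := hV0 r hr
      rw [Real.norm_eq_abs, abs_of_nonneg (mul_nonneg hVr (sq_nonneg _))]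
      by_cases hrin : r ∈ Icc a b
      · have hra : a ≤ r := hrin.1
        have hra' : (1:ℝ) ≤ r / a := (one_le_div ha).mpr hra
        have h5 : (∑ j, c j * φ j r) ^ 2 ≤ C^2 * (r/a) :=
          le_trans (hbd r) (le_mul_of_one_le_right (sq_nonneg C) hra')
        have heq : C^2 / a * (V r * r) = V r * (C^2 * (r/a)) := by
          field_simp
        rw [heq]
        exact mul_le_mul_of_nonneg_left h5 hVr
      · have hz : ∀ j, φ j r = 0 := fun j => my_u0 (hφab j) hrin
        have : (∑ j, c j * φ j r) = 0 := by simp [hz]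
        rw [this]
        have : (0:ℝ) ≤ C^2 / a * (V r * r) := by positivity
        simpa using this
  -- strict form inequality
  have hsplit : ∀ c : Fin N → ℝ, c ≠ 0 →
      ∑ j, ∑ k, c j * c k * M j k < ∫ r in Ioi (0:ℝ), V r * (∑ j, c j * φ j r) ^ 2 := by
    intro c hc
    have h := hneg c hc
    have heq : ∀ r ∈ Ioi (0:ℝ),
        ((deriv (fun t => ∑ j, c j * φ j t) r) ^ 2 +
          ((α ^ 2 - 1 / 4) / r ^ 2 - V r) * (∑ j, c j * φ j r) ^ 2)
        = (deriv (fun t => ∑ j, c j * φ j t) r ^ 2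
            + (α^2 - 1/4)/r^2 * (fun t => ∑ j, c j * φ j t) r ^ 2)
          - V r * (∑ j, c j * φ j r) ^ 2 := fun r _ => by simp only []; ring
    rw [setIntegral_congr_fun measurableSet_Ioi heq,
      integral_sub (my_int_f1 hα (hUsm c) ha (hUsupp c)) (hVu2 c)] at h
    have hA : (∫ r in Ioi (0:ℝ), (deriv (fun t => ∑ j, c j * φ j t) r ^ 2
        + (α^2 - 1/4)/r^2 * (fun t => ∑ j, c j * φ j t) r ^ 2))
        = ∑ j, ∑ k, c j * c k * M j k := by
      rw [my_lemA hα (hUsm c) ha (hUsupp c)]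
      exact hquad c
    rw [hA] at h
    linarith
  -- pointwise bound via lemma B, rewritten through ψ
  have hlemB' : ∀ (c : Fin N → ℝ) (r : ℝ), 0 < r →
      (∑ j, c j * φ j r) ^ 2 ≤ r / (2*α) * ∑ j, ∑ k, c j * c k * M j k := by
    intro c r hr
    have hB : (∑ j, c j * φ j r) ^ 2 ≤ r / (2*α) * ∫ s in Ioi (0:ℝ),
        (deriv (fun t => ∑ j, c j * φ j t) s - (1/2 - α) * (∑ j, c j * φ j s) / s) ^ 2 :=
      my_lemB hα (hUsm c) ha (hUsupp c) hr
    rwa [hquad c] at hB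

  -- nonnegativity of the M-quadratic form
  have hqnonneg : ∀ c : Fin N → ℝ, 0 ≤ ∑ j, ∑ k, c j * c k * M j k := by
    intro c
    rw [← hbil c c]
    exact setIntegral_nonneg measurableSet_Ioi fun s _ => mul_self_nonneg _
  -- M is positive definite
  have hMpos : M.PosDef := by
    refine Matrix.PosDef.of_dotProduct_mulVec_pos ?_ ?_
    · show M.conjTranspose = M
      ext i j
      simp only [Matrix.conjTranspose_apply, star_trivial]
      rw [hMapp, hMapp]
      exact integral_congr_ae (Filter.Eventually.of_forall fun s => mul_comm _ _)
    · intro x hx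
      have hdot : dotProduct (star x) (M.mulVec x) = ∑ j, ∑ k, x j * x k * M j k := by
        simp only [dotProduct, Matrix.mulVec, Pi.star_apply, star_trivial,
          Finset.mul_sum]
        exact Finset.sum_congr rfl fun j _ => Finset.sum_congr rfl fun k _ => by ring
      rw [hdot]
      rcases eq_or_lt_of_le (hqnonneg x) with h0 | h0
      · exfalso
        have hz : ∀ r : ℝ, (∑ j, x j * φ j r) = 0 := by
          intro r
          rcases le_or_gt r 0 with hr | hr
          · have hzz : ∀ j, φ j r = 0 := fun j =>
              image_eq_zero_of_notMem_tsupport fun hmem => absurd (hφsupp j hmem) (not_lt.mpr hr)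
            simp [hzz]
          · have hb := hlemB' x r hr
            rw [← h0] at hb
            have hsq : (∑ j, x j * φ j r) ^ 2 = 0 :=
              le_antisymm (by linarith) (sq_nonneg _)
            exact pow_eq_zero_iff (two_ne_zero) |>.mp hsq
        have hx0 : x = 0 := by
          have hsum : ∑ j, x j • φ j = 0 := by
            funext t
            simp only [Finset.sum_apply, Pi.smul_apply, smul_eq_mul, Pi.zero_apply]
            exact hz t
          funext i
          exact Fintype.linearIndependent_iff.mp hφli x hsum i
        exact hx hx0
      · exact h0
  -- matrix square root and its inverse
  open scoped MatrixOrder in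
  set S : Matrix (Fin N) (Fin N) ℝ := CFC.sqrt M with hSdef
  open scoped MatrixOrder in
  have hSS : S * S = M := CFC.sqrt_mul_sqrt_self M hMpos.posSemidef.nonneg
  open scoped MatrixOrder in
  have hSherm : S.conjTranspose = S := (Matrix.nonneg_iff_posSemidef.mp (CFC.sqrt_nonneg M)).isHermitian
  have hSdetu : IsUnit S.det := by
    have hdm : 0 < M.det := hMpos.det_pos
    have hmul : S.det * S.det = M.det := by rw [← Matrix.det_mul, hSS]
    apply isUnit_iff_ne_zero.mpr
    intro h0
    rw [h0, zero_mul] at hmul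
    exact (ne_of_gt hdm) hmul.symm
  set T : Matrix (Fin N) (Fin N) ℝ := S⁻¹ with hTdef
  have hTS : T * S = 1 := Matrix.nonsing_inv_mul S hSdetu
  have hST : S * T = 1 := Matrix.mul_nonsing_inv S hSdetu
  have hTMT : T * M * T = 1 := by
    rw [← hSS, ← Matrix.mul_assoc T S S, hTS, Matrix.one_mul, hST]
  have hSsymm : ∀ i j, S i j = S j i := by
    intro i j
    calc S i j = S.conjTranspose i j := by rw [hSherm]
      _ = S j i := star_trivial _
  have hStrans : S.transpose = S := Matrix.ext fun i j => by
    rw [Matrix.transpose_apply]; exact hSsymm j i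
  have hTsymm : ∀ i j, T i j = T j i := by
    intro i j
    have h1 : T.transpose = T := by rw [hTdef, Matrix.transpose_nonsing_inv, hStrans]
    calc T i j = T.transpose j i := (Matrix.transpose_apply T j i).symm
      _ = T j i := by rw [h1]
  have horth : ∀ i i', ∑ j, ∑ k, T i j * T i' k * M j k
      = (1 : Matrix (Fin N) (Fin N) ℝ) i i' := by
    intro i i'
    calc ∑ j, ∑ k, T i j * T i' k * M j k
        = ∑ k, ∑ j, (T i j * M j k) * T k i' := by
          rw [Finset.sum_comm]
          refine Finset.sum_congr rfl fun k _ => Finset.sum_congr rfl fun j _ => ?_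
          rw [hTsymm i' k]
          ring
      _ = ∑ k, (∑ j, T i j * M j k) * T k i' := by
          refine Finset.sum_congr rfl fun k _ => ?_
          rw [Finset.sum_mul]
      _ = (T * M * T) i i' := by
          rw [Matrix.mul_apply]
          refine Finset.sum_congr rfl fun k _ => ?_
          rw [Matrix.mul_apply]
      _ = (1 : Matrix (Fin N) (Fin N) ℝ) i i' := by rw [hTMT]
  have hTrow : ∀ i : Fin N, (fun j => T i j) ≠ 0 := by
    intro i h0
    have h9 := horth i i
    rw [Matrix.one_apply_eq] at h9
    have hzt : ∀ j, T i j = 0 := fun j => congrFun h0 j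
    simp [hzt] at h9
  have hν : ∀ i : Fin N, (1:ℝ) < ∫ r in Ioi (0:ℝ), V r * (∑ j, T i j * φ j r) ^ 2 := by
    intro i
    have h8 := hsplit (fun j => T i j) (hTrow i)
    beta_reduce at h8
    rwa [horth i i, Matrix.one_apply_eq] at h8
  -- pointwise bound on the sum of squares
  have hsum_bound : ∀ r ∈ Ioi (0:ℝ), ∑ i, (∑ j, T i j * φ j r) ^ 2 ≤ r / (2*α) := by
    intro r hr
    have hrpos : (0:ℝ) < r := hr
    have htnn : 0 ≤ ∑ i, (∑ j, T i j * φ j r) ^ 2 := Finset.sum_nonneg fun i _ => sq_nonneg _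
    rcases eq_or_lt_of_le htnn with h0 | h0
    · rw [← h0]; positivity
    · set aa : Fin N → ℝ := fun i => ∑ k, T i k * φ k r with haa
      set bb : Fin N → ℝ := fun j => ∑ i, aa i * T i j with hbb
      have hval : (∑ j, bb j * φ j r) = ∑ i, (∑ j, T i j * φ j r) ^ 2 := by
        calc ∑ j, bb j * φ j r = ∑ i, aa i * (∑ k, T i k * φ k r) :=
            my_vecswap T aa (fun j => φ j r)
          _ = ∑ i, (∑ j, T i j * φ j r) ^ 2 :=
            Finset.sum_congr rfl fun i _ => (sq _).symm
      have hgram : ∀ i i', (∫ s in Ioi (0:ℝ),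
          (∑ k, T i k * ψ k s) * (∑ l, T i' l * ψ l s))
          = (1 : Matrix (Fin N) (Fin N) ℝ) i i' := by
        intro i i'
        rw [my_integral_sum_mul_sum ψ (fun k => T i k) (fun l => T i' l) hψint]
        exact horth i i'
      have hgint : ∀ i i' : Fin N, IntegrableOn
          (fun s => (∑ k, T i k * ψ k s) * (∑ l, T i' l * ψ l s)) (Ioi (0:ℝ)) := by
        intro i i'
        have hfe : (fun s => (∑ k, T i k * ψ k s) * (∑ l, T i' l * ψ l s))
            = fun s => ∑ k, ∑ l, (T i k * T i' l) * (ψ k s * ψ l s) := by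
          funext s
          rw [Finset.sum_mul_sum]
          exact Finset.sum_congr rfl fun k _ => Finset.sum_congr rfl fun l _ => by ring
        rw [hfe]
        apply integrable_finset_sum
        intro k _
        apply integrable_finset_sum
        intro l _
        exact (hψint k l).const_mul _
      have hexp : ∀ s : ℝ, ∑ j, bb j * ψ j s = ∑ i, aa i * (∑ k, T i k * ψ k s) :=
        fun s => my_vecswap T aa (fun j => ψ j s)
      have hquadb : ∑ j, ∑ k, bb j * bb k * M j k = ∑ i, (∑ j, T i j * φ j r) ^ 2 := by
        rw [← hbil bb bb]
        calc ∫ s in Ioi (0:ℝ), (∑ j, bb j * ψ j s) * (∑ k, bb k * ψ k s)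
            = ∫ s in Ioi (0:ℝ), (∑ i, aa i * (∑ k, T i k * ψ k s))
              * (∑ i', aa i' * (∑ l, T i' l * ψ l s)) := by
              apply setIntegral_congr_fun measurableSet_Ioi
              intro s _
              beta_reduce
              rw [hexp s]
          _ = ∑ i, ∑ i', aa i * aa i' * ∫ s in Ioi (0:ℝ),
              (∑ k, T i k * ψ k s) * (∑ l, T i' l * ψ l s) :=
              my_integral_sum_mul_sum (fun i s => ∑ k, T i k * ψ k s) aa aa hgint
          _ = ∑ i, ∑ i', aa i * aa i' * (1 : Matrix (Fin N) (Fin N) ℝ) i i' := by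
              refine Finset.sum_congr rfl fun i _ => Finset.sum_congr rfl fun i' _ => ?_
              rw [hgram i i']
          _ = ∑ i, (∑ j, T i j * φ j r) ^ 2 := by
              have hrow : ∀ i : Fin N,
                  (∑ i', aa i * aa i' * (1 : Matrix (Fin N) (Fin N) ℝ) i i') = aa i ^ 2 := by
                intro i
                rw [Finset.sum_eq_single i]
                · rw [Matrix.one_apply_eq]; ring
                · intro i' _ hne
                  rw [Matrix.one_apply_ne' hne]; ring
                · intro h; exact absurd (Finset.mem_univ i) h
              rw [Finset.sum_congr rfl fun i _ => hrow i]
      have hBb := hlemB' bb r hrpos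
      rw [hquadb, hval] at hBb
      nlinarith [hBb, h0]
  -- integrability for the final comparison
  have hsum_int : IntegrableOn (fun r => V r * ∑ i, (∑ j, T i j * φ j r) ^ 2) (Ioi (0:ℝ)) := by
    have hfe : (fun r => V r * ∑ i, (∑ j, T i j * φ j r) ^ 2)
        = fun r => ∑ i, V r * (∑ j, T i j * φ j r) ^ 2 := by
      funext r; rw [Finset.mul_sum]
    rw [hfe]
    exact integrable_finset_sum _ fun i _ => hVu2 (fun j => T i j)
  have hrhs_int : IntegrableOn (fun r => V r * (r / (2*α))) (Ioi (0:ℝ)) := by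
    have hfe : (fun r => V r * (r / (2*α))) = fun r => (2*α)⁻¹ * (V r * r) := by
      funext r; ring
    rw [hfe]
    exact hVint.const_mul _
  have big : (N:ℝ) < (2*α)⁻¹ * ∫ r in Ioi (0:ℝ), V r * r := by
    calc (N:ℝ) = ∑ _i : Fin N, (1:ℝ) := by simp
      _ < ∑ i, ∫ r in Ioi (0:ℝ), V r * (∑ j, T i j * φ j r) ^ 2 :=
          Finset.sum_lt_sum_of_nonempty Finset.univ_nonempty fun i _ => hν i
      _ = ∫ r in Ioi (0:ℝ), ∑ i, V r * (∑ j, T i j * φ j r) ^ 2 :=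
          (integral_finset_sum _ fun i _ => hVu2 (fun j => T i j)).symm
      _ = ∫ r in Ioi (0:ℝ), V r * ∑ i, (∑ j, T i j * φ j r) ^ 2 := by
          apply setIntegral_congr_fun measurableSet_Ioi
          intro r _
          beta_reduce
          rw [Finset.mul_sum]
      _ ≤ ∫ r in Ioi (0:ℝ), V r * (r / (2*α)) := by
          apply setIntegral_mono_on hsum_int hrhs_int measurableSet_Ioi
          intro r hr
          exact mul_le_mul_of_nonneg_left (hsum_bound r hr) (hV0 r hr)
      _ = (2*α)⁻¹ * ∫ r in Ioi (0:ℝ), V r * r := by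
          rw [← integral_const_mul]
          apply setIntegral_congr_fun measurableSet_Ioi
          intro r _
          ring
  exact le_of_lt big
end

section
/- Let α > 0 and let V : (0,∞) → [0,∞). Then the kernel √(V(r))·T_0⁻¹(r,r')·√(V(r')) is positive definite on (0,∞)×(0,∞), where for r ≤ r', T_0⁻¹(r,r') = √(rr')·(1/(2α) - log r') if r ≤ r' ≤ 1, = √(rr')·(1/(2α))·(r/r')^α if 1 < r ≤ r', and = √(rr')·(1/(2α))·(r')^{-α} if r ≤ 1 ≤ r' (extended symmetrically). -/
/-!
With `m = max 1 r` and `m' = max 1 r'`, the three cases of the definition combine into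
`T₀⁻¹(r,r') / √(r r') = m^{-α} m'^{-α} min(m^{2α}, m'^{2α}) / (2α) + min(-log m₋, -log m₋')`,
where `m₋ = min 1 r` and `m₋' = min 1 r'`.
Both summands are of the form `a(r) a(r') min(c(r), c(r'))` with `c ≥ 0`, and
`min(c, c') = |[0, c] ∩ [0, c']|` is a Gram kernel of indicators in `L²`, hence positive
semidefinite; the factors `√V` only rescale the vector the quadratic form is evaluated at.
-/

open Real

/-- The limiting Green's function `T_0⁻¹(r,r')` in the angular momentum channel `m = 0`,
written symmetrically via `u = min r r'`, `v = max r r'`. -/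
noncomputable def T0inv (α r r' : ℝ) : ℝ :=
  let u := min r r'
  let v := max r r'
  if v ≤ 1 then Real.sqrt (u * v) * (1 / (2 * α) - Real.log v)
  else if 1 < u then Real.sqrt (u * v) * (1 / (2 * α)) * (u / v) ^ α
  else Real.sqrt (u * v) * (1 / (2 * α)) * v ^ (-α)

theorem Matrix.posSemidef_of_min {ι : Type*} [Finite ι] (c : ι → ℝ) (hc : ∀ i, 0 ≤ c i) :
    (Matrix.of fun i j ↦ min (c i) (c j)).PosSemidef := by
  have : (Matrix.of fun i j ↦ min (c i) (c j)) =
      Matrix.of fun i j ↦ MeasureTheory.volume.real (Set.Icc 0 (c i) ∩ Set.Icc 0 (c j)) := by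
    ext i j
    rw [Matrix.of_apply, Matrix.of_apply, Set.Icc_inter_Icc, Real.volume_real_Icc, max_self,
      sub_zero, max_eq_left (le_min (hc i) (hc j))]
  rw [this]
  exact MeasureTheory.posSemidef_matrix_measure_inter (fun _ ↦ measurableSet_Icc)
    (fun _ ↦ isCompact_Icc.measure_ne_top)

theorem sum_mul_mul_min_nonneg {ι : Type*} [Fintype ι] (x a c : ι → ℝ) (hc : ∀ i, 0 ≤ c i) :
    0 ≤ ∑ j, ∑ k, x j * x k * (a j * a k * min (c j) (c k)) := by
  have := (Matrix.posSemidef_of_min c hc).dotProduct_mulVec_nonneg (x * a)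
  simp only [dotProduct, Matrix.mulVec, Matrix.of_apply, Pi.star_apply, star_trivial,
    Pi.mul_apply, Finset.mul_sum] at this
  exact this.trans_eq (Finset.sum_congr rfl fun j _ ↦ Finset.sum_congr rfl fun k _ ↦ by ring)

theorem T0inv_comm (α r r' : ℝ) : T0inv α r r' = T0inv α r' r := by
  unfold T0inv
  rw [min_comm, max_comm]

theorem T0inv_eq_of_pos {α r r' : ℝ} (hα : 0 < α) (hr : 0 < r) (hr' : 0 < r') :
    T0inv α r r' = √r * √r' *
      ((max 1 r) ^ (-α) * (max 1 r') ^ (-α) *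
          min ((max 1 r) ^ (2 * α) / (2 * α)) ((max 1 r') ^ (2 * α) / (2 * α)) +
        min (-log (min 1 r)) (-log (min 1 r'))) := by
  wlog hrr' : r ≤ r' generalizing r r'
  · rw [T0inv_comm, this hr' hr (le_of_not_ge hrr'), min_comm (-log _), min_comm (_ / _)]
    ring
  simp only [T0inv, min_eq_left hrr', max_eq_right hrr', sqrt_mul hr.le]
  rcases le_or_gt r' 1 with hr'1 | h1r'
  · have hr1 := hrr'.trans hr'1
    rw [if_pos hr'1, max_eq_left hr1, max_eq_left hr'1, min_eq_right hr1, min_eq_right hr'1,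
      one_rpow, one_rpow, min_self, min_eq_right (neg_le_neg (log_le_log hr hrr'))]
    ring
  have h2α : 0 < 2 * α := by positivity
  rcases le_or_gt r 1 with hr1 | h1r
  · rw [if_neg h1r'.not_ge, if_neg hr1.not_gt, max_eq_left hr1, max_eq_right h1r'.le,
      min_eq_right hr1, min_eq_left h1r'.le, log_one, neg_zero, one_rpow, one_rpow,
      min_eq_left (div_le_div_of_nonneg_right (one_le_rpow h1r'.le h2α.le) h2α.le),
      min_eq_right (neg_nonneg.2 (log_nonpos hr.le hr1))]
    ring
  · rw [if_neg h1r'.not_ge, if_pos h1r, max_eq_right h1r.le, max_eq_right h1r'.le,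
      min_eq_left h1r.le, min_eq_left h1r'.le, log_one, neg_zero, min_self, add_zero,
      min_eq_left (div_le_div_of_nonneg_right (rpow_le_rpow hr.le hrr' h2α.le) h2α.le),
      div_rpow hr.le hr'.le, rpow_neg hr.le, rpow_neg hr'.le, two_mul, rpow_add hr]
    field_simp

theorem stmt_17_general (α : ℝ) (hα : 0 < α) (V : ℝ → ℝ)
    (N : ℕ) (r : Fin N → ℝ) (hr : ∀ j, 0 < r j) (x : Fin N → ℝ) :
    0 ≤ ∑ j, ∑ k, x j * x k *
      (Real.sqrt (V (r j)) * T0inv α (r j) (r k) * Real.sqrt (V (r k))) := by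
  set d : Fin N → ℝ := fun j ↦ √(V (r j)) * √(r j)
  set m : Fin N → ℝ := fun j ↦ max 1 (r j)
  have hsplit : ∀ j k, x j * x k * (√(V (r j)) * T0inv α (r j) (r k) * √(V (r k))) =
      x j * x k * (d j * m j ^ (-α) * (d k * m k ^ (-α)) *
          min (m j ^ (2 * α) / (2 * α)) (m k ^ (2 * α) / (2 * α))) +
        x j * x k * (d j * d k * min (-log (min 1 (r j))) (-log (min 1 (r k)))) := by
    intro j k
    rw [T0inv_eq_of_pos hα (hr j) (hr k)]
    ring
  simp_rw [hsplit, Finset.sum_add_distrib]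
  exact add_nonneg (sum_mul_mul_min_nonneg _ _ _ fun j ↦
      div_nonneg (rpow_nonneg (zero_le_one.trans (le_max_left _ _)) _) (by positivity))
    (sum_mul_mul_min_nonneg _ _ _ fun j ↦
      neg_nonneg.2 (log_nonpos (le_min zero_le_one (hr j).le) (min_le_left _ _)))

/-- The kernel `√(V(r)) T_0⁻¹(r,r') √(V(r'))` is positive definite on `(0,∞)²`. -/
theorem stmt_17 (α : ℝ) (hα : 0 < α) (V : ℝ → ℝ) (hV : ∀ r, 0 ≤ V r)
    (N : ℕ) (r : Fin N → ℝ) (hr : ∀ j, 0 < r j) (x : Fin N → ℝ) :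
    0 ≤ ∑ j, ∑ k, x j * x k *
      (Real.sqrt (V (r j)) * T0inv α (r j) (r k) * Real.sqrt (V (r k))) :=
  stmt_17_general α hα V N r hr x
end

section
/- Let V : (1,∞) → [0,∞) be measurable with ∫₁^∞ V(r)·(log r)·r dr < ∞. Then the number of negative eigenvalues of -d²/dr² - 1/(4r²) - V on L²(1,∞) with Dirichlet boundary condition at r = 1 is at most ∫₁^∞ V(r)·(log r)·r dr. -/
open MeasureTheory Set Matrix

open scoped MatrixOrder in
lemma aux_trace_nonneg {N : ℕ} (D E : Matrix (Fin N) (Fin N) ℝ) (hD : D.PosDef)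
    (hE : ∀ x : Fin N → ℝ, 0 ≤ x ⬝ᵥ E *ᵥ x) : 0 ≤ (D⁻¹ * E).trace := by
  classical
  set S := CFC.sqrt D with hSdef
  have hSS : S * S = D := CFC.sqrt_mul_sqrt_self D hD.posSemidef.nonneg
  have hSherm : Sᵀ = S := by
    have := (CFC.sqrt_nonneg D).posSemidef.isHermitian
    exact (Matrix.conjTranspose_eq_transpose_of_trivial S).symm.trans this
  have hdetD : IsUnit D.det := hD.isUnit.map (Matrix.detMonoidHom)
  have hdetS : IsUnit S.det := by
    have h : S.det * S.det = D.det := by rw [← Matrix.det_mul, hSS]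
    exact isUnit_of_mul_isUnit_left (h ▸ hdetD)
  have hDinv : D⁻¹ = S⁻¹ * S⁻¹ := by rw [← hSS, Matrix.mul_inv_rev]
  have hSinvT : (S⁻¹)ᵀ = S⁻¹ := by rw [Matrix.transpose_nonsing_inv, hSherm]
  rw [hDinv, ← Matrix.trace_mul_cycle S⁻¹ E S⁻¹]
  -- trace (S⁻¹ * E * S⁻¹)
  rw [Matrix.trace]
  apply Finset.sum_nonneg
  intro i _
  have hentry : (S⁻¹ * E * S⁻¹) i i
      = (fun j => S⁻¹ i j) ⬝ᵥ E *ᵥ (fun j => S⁻¹ i j) := by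
    have hcol : ∀ k, S⁻¹ k i = S⁻¹ i k := by
      intro k
      conv_lhs => rw [← hSinvT]
      simp
    simp only [Matrix.mul_apply, dotProduct, Matrix.mulVec, dotProduct,
      Finset.sum_mul, Finset.mul_sum]
    rw [Finset.sum_comm]
    refine Finset.sum_congr rfl fun j _ => Finset.sum_congr rfl fun k _ => ?_
    rw [hcol k]; ring
  rw [Matrix.diag_apply, hentry]
  exact hE _

/-- The number of negative eigenvalues of `-d²/dr² - (4r²)⁻¹ - V` on `L²(1,∞)` with a
Dirichlet condition at `r = 1` is at most `∫₁^∞ V(r) (log r) r dr`: by the variational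
principle this is expressed by saying that any finite-dimensional space of test
functions (smooth, compactly supported in `(1,∞)`) on which the quadratic form is
negative definite has dimension at most that bound. -/
theorem stmt_19 (V : ℝ → ℝ) (hVmeas : Measurable V)
    (hV0 : ∀ r ∈ Ioi (1 : ℝ), 0 ≤ V r)
    (hVint : IntegrableOn (fun r => V r * Real.log r * r) (Ioi (1 : ℝ))) :
    ∀ (N : ℕ) (φ : Fin N → ℝ → ℝ),
      (∀ j, ContDiff ℝ (⊤ : ℕ∞) (φ j)) → (∀ j, HasCompactSupport (φ j)) →
      (∀ j, tsupport (φ j) ⊆ Ioi (1 : ℝ)) →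
      LinearIndependent ℝ φ →
      (∀ c : Fin N → ℝ, c ≠ 0 →
        (∫ r in Ioi (1 : ℝ),
            ((deriv (fun t => ∑ j, c j * φ j t) r) ^ 2 +
              (-(1 / (4 * r ^ 2)) - V r) * (∑ j, c j * φ j r) ^ 2)) < 0) →
      (N : ℝ) ≤ ∫ r in Ioi (1 : ℝ), V r * Real.log r * r := by
  intro N φ hφ hcs hsupp hli hneg
  classical
  -- the substituted functions u j = φ j / sqrt r
  set u : Fin N → ℝ → ℝ := fun j r => φ j r * (Real.sqrt r)⁻¹ with hu_def
  set f : Fin N → ℝ → ℝ := fun j s => Real.sqrt s * deriv (u j) s with hf_def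
  set K0 : Set ℝ := ⋃ j, tsupport (φ j) with hK0_def
  have hK0cpt : IsCompact K0 := isCompact_iUnion fun j => hcs j
  have hK0sub : K0 ⊆ Ioi 1 := iUnion_subset fun j => hsupp j
  -- vanishing
  have hu0 : ∀ j x, x ∉ tsupport (φ j) → u j x = 0 := by
    intro j x hx
    simp [hu_def, image_eq_zero_of_notMem_tsupport hx]
  have hudiff : ∀ j x, 0 < x → DifferentiableAt ℝ (u j) x := by
    intro j x hx
    exact ((hφ j).differentiable (by simp) x).mul
      ((Real.hasDerivAt_sqrt hx.ne').differentiableAt.inv (Real.sqrt_ne_zero'.2 hx))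
  have hucd : ∀ j, ContDiffOn ℝ 1 (u j) (Ioi 0) := by
    intro j x hx
    exact (((hφ j).of_le (by simp)).contDiffAt.mul
      ((Real.contDiffAt_sqrt hx.ne').inv (Real.sqrt_ne_zero'.2 hx))).contDiffWithinAt
  have hudc : ∀ j, ContinuousOn (deriv (u j)) (Ioi 0) := fun j =>
    (hucd j).continuousOn_deriv_of_isOpen isOpen_Ioi le_rfl
  have hud0 : ∀ j x, x ∉ tsupport (φ j) → deriv (u j) x = 0 := by
    intro j x hx
    have hopen : IsOpen (tsupport (φ j))ᶜ := (isClosed_tsupport _).isOpen_compl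
    have hev : u j =ᶠ[nhds x] (fun _ => (0:ℝ)) :=
      Filter.eventually_of_mem (hopen.mem_nhds hx) (fun y hy => hu0 j y hy)
    rw [hev.deriv_eq, deriv_const]
  have hφeq : ∀ j x, 0 < x → φ j x = Real.sqrt x * u j x := by
    intro j x hx
    have : Real.sqrt x ≠ 0 := Real.sqrt_ne_zero'.2 hx
    simp only [hu_def]
    rw [mul_left_comm, mul_inv_cancel₀ this, mul_one]
  have hfcont : ∀ j, ContinuousOn (f j) (Ioi 0) := by
    intro j
    exact (Real.continuous_sqrt.continuousOn).mul (hudc j)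
  have hfsupp : ∀ j, Function.support (f j) ⊆ K0 := by
    intro j x hx
    rcases Classical.em (x ∈ tsupport (φ j)) with h | h
    · exact mem_iUnion.2 ⟨j, h⟩
    · exact absurd (by simp [hf_def, hud0 j x h]) hx
  -- generic integrability of compactly supported functions continuous on (0,∞)
  have key_int : ∀ g : ℝ → ℝ, ContinuousOn g (Ioi 0) → Function.support g ⊆ K0 →
      IntegrableOn g (Ioi 1) := by
    intro g hg hsup
    have h01 : (Ioi (1:ℝ)) ⊆ Ioi 0 := Ioi_subset_Ioi (by norm_num)
    have hK : IntegrableOn g K0 :=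
      (hg.mono (hK0sub.trans h01)).integrableOn_compact hK0cpt
    have : Integrable g := (integrableOn_iff_integrable_of_support_subset hsup).1 hK
    exact this.integrableOn
  have hu1 : ∀ j, u j 1 = 0 := by
    intro j
    exact hu0 j 1 (fun h => absurd (hsupp j h) (by norm_num))
  -- FTC for u j
  have hftc : ∀ j r, 1 < r → ∫ s in Ioc 1 r, deriv (u j) s = u j r := by
    intro j r hr
    have hsub : uIcc (1:ℝ) r ⊆ Ioi 0 := by
      rw [uIcc_of_le hr.le]
      intro x hx
      exact lt_of_lt_of_le (by norm_num) hx.1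
    have h1 : ∫ s in (1:ℝ)..r, deriv (u j) s = u j r - u j 1 :=
      intervalIntegral.integral_deriv_eq_sub
        (fun x hx => hudiff j x (hsub hx)) (((hudc j).mono hsub).intervalIntegrable)
    rw [intervalIntegral.integral_of_le hr.le] at h1
    rw [h1, hu1 j, sub_zero]
    -- linear combinations
  set Φ : (Fin N → ℝ) → ℝ → ℝ := fun c => fun t => ∑ j, c j * φ j t with hΦ_def
  set U : (Fin N → ℝ) → ℝ → ℝ := fun c t => ∑ j, c j * u j t with hU_def
  set F : (Fin N → ℝ) → ℝ → ℝ := fun c s => ∑ j, c j * f j s with hF_def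
  have hUderiv : ∀ c x, 0 < x → HasDerivAt (U c) (∑ j, c j * deriv (u j) x) x := by
    intro c x hx
    exact HasDerivAt.fun_sum fun j _ => ((hudiff j x hx).hasDerivAt.const_mul (c j))
  have hUdd : ∀ c x, 0 < x → deriv (U c) x = ∑ j, c j * deriv (u j) x :=
    fun c x hx => (hUderiv c x hx).deriv
  have hFU : ∀ c s, 0 < s → F c s = Real.sqrt s * deriv (U c) s := by
    intro c s hs
    simp only [hF_def, hf_def, hUdd c s hs, Finset.mul_sum]
    exact Finset.sum_congr rfl fun j _ => by ring
  have hΦU : ∀ c x, 0 < x → Φ c x = Real.sqrt x * U c x := by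
    intro c x hx
    simp only [hΦ_def, hU_def, Finset.mul_sum]
    exact Finset.sum_congr rfl fun j _ => by rw [hφeq j x hx]; ring
  have hU1 : ∀ c, U c 1 = 0 := by intro c; simp [hU_def, hu1]
  have hudint : ∀ j (r : ℝ), IntegrableOn (deriv (u j)) (Ioc 1 r) := by
    intro j r
    have hIcc : Icc (1:ℝ) r ⊆ Ioi 0 := fun x hx => lt_of_lt_of_le one_pos hx.1
    exact (((hudc j).mono hIcc).integrableOn_compact isCompact_Icc).mono_set
      Ioc_subset_Icc_self
  have hUftc : ∀ c r, 1 < r → ∫ s in Ioc 1 r, deriv (U c) s = U c r := by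
    intro c r hr
    have h1 : ∀ s ∈ Ioc (1:ℝ) r, deriv (U c) s = ∑ j, c j * deriv (u j) s :=
      fun s hs => hUdd c s (lt_trans one_pos hs.1)
    rw [setIntegral_congr_fun measurableSet_Ioc h1,
      integral_finset_sum _ (fun j _ => ((hudint j r).const_mul (c j)))]
    simp only [hU_def]
    exact Finset.sum_congr rfl fun j _ => by
      rw [integral_const_mul, hftc j r hr]
  set Dm : Matrix (Fin N) (Fin N) ℝ :=
    Matrix.of (fun j k => ∫ s in Ioi 1, f j s * f k s) with hDm_def
  set hh : ℝ → ℝ → ℝ := fun r => (Ioc (1:ℝ) r).indicator (fun s => (Real.sqrt s)⁻¹)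
    with hh_def
  have hFh : ∀ c (r : ℝ), (fun s => F c s * hh r s)
      = (Ioc (1:ℝ) r).indicator (deriv (U c)) := by
    intro c r
    funext s
    by_cases hs : s ∈ Ioc (1:ℝ) r
    · have hs0 : (0:ℝ) < s := lt_trans one_pos hs.1
      have hsne : Real.sqrt s ≠ 0 := Real.sqrt_ne_zero'.2 hs0
      simp only [hh_def, Set.indicator_of_mem hs]
      rw [hFU c s hs0]
      field_simp
    · simp only [hh_def, Set.indicator_of_notMem hs, mul_zero]
  have hUd_int : ∀ c (r : ℝ), IntegrableOn (deriv (U c)) (Ioc 1 r) := by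
    intro c r
    have h2 : IntegrableOn (fun s => ∑ j, c j * deriv (u j) s) (Ioc 1 r) :=
      integrable_finset_sum _ (fun j _ => (hudint j r).const_mul (c j))
    exact h2.congr_fun (fun s hs => (hUdd c s (lt_trans one_pos hs.1)).symm)
      measurableSet_Ioc
  have hFh_int : ∀ c (r : ℝ), IntegrableOn (fun s => F c s * hh r s) (Ioi 1) := by
    intro c r
    rw [hFh c r]
    exact ((hUd_int c r).integrable_indicator measurableSet_Ioc).integrableOn
  have hFh_val : ∀ c (r : ℝ), 1 < r → ∫ s in Ioi 1, F c s * hh r s = U c r := by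
    intro c r hr
    have hint : Ioi (1:ℝ) ∩ Ioc 1 r = Ioc 1 r :=
      inter_eq_self_of_subset_right (fun x hx => hx.1)
    rw [hFh c r, setIntegral_indicator measurableSet_Ioc, hint, hUftc c r hr]
  have hh2 : ∀ (r : ℝ), (fun s => hh r s ^ 2)
      = (Ioc (1:ℝ) r).indicator (fun s => s⁻¹) := by
    intro r
    funext s
    by_cases hs : s ∈ Ioc (1:ℝ) r
    · simp only [hh_def, Set.indicator_of_mem hs]
      rw [inv_pow, Real.sq_sqrt (le_of_lt (lt_trans one_pos hs.1))]
    · simp [hh_def, Set.indicator_of_notMem hs]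
  have hh2_int : ∀ (r : ℝ), IntegrableOn (fun s => hh r s ^ 2) (Ioi 1) := by
    intro r
    rw [hh2 r]
    have hIcc : Icc (1:ℝ) r ⊆ {(0:ℝ)}ᶜ := by
      intro x hx hx0
      simp only [mem_singleton_iff] at hx0
      rw [hx0] at hx
      exact absurd hx.1 (by norm_num)
    have : IntegrableOn (fun s : ℝ => s⁻¹) (Ioc 1 r) :=
      (((continuousOn_inv₀).mono hIcc).integrableOn_compact isCompact_Icc).mono_set
        Ioc_subset_Icc_self
    exact (this.integrable_indicator measurableSet_Ioc).integrableOn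
  have hh2_val : ∀ (r : ℝ), 1 < r → ∫ s in Ioi 1, hh r s ^ 2 = Real.log r := by
    intro r hr
    have hint : Ioi (1:ℝ) ∩ Ioc 1 r = Ioc 1 r :=
      inter_eq_self_of_subset_right (fun x hx => hx.1)
    rw [hh2 r, setIntegral_indicator measurableSet_Ioc, hint,
      ← intervalIntegral.integral_of_le hr.le,
      integral_inv_of_pos one_pos (lt_trans one_pos hr), div_one]
  have hFcont : ∀ c, ContinuousOn (F c) (Ioi 0) := by
    intro c
    simp only [hF_def]
    exact continuousOn_finset_sum _ (fun j _ => (hfcont j).const_smul (c j))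
  have hFsupp : ∀ c, Function.support (F c) ⊆ K0 := by
    intro c x hx
    by_contra hxK
    refine hx ?_
    simp only [hF_def]
    refine Finset.sum_eq_zero fun j _ => ?_
    have : f j x = 0 := by
      by_contra h
      exact hxK (hfsupp j h)
    rw [this, mul_zero]
  have hF2_int : ∀ c, IntegrableOn (fun s => F c s ^ 2) (Ioi 1) := by
    intro c
    refine key_int _ ((hFcont c).pow 2) ?_
    intro x hx
    refine hFsupp c ?_
    intro h
    exact hx (by simp [h])
  have hff_int : ∀ j k, IntegrableOn (fun s => f j s * f k s) (Ioi 1) := by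
    intro j k
    refine key_int _ ((hfcont j).mul (hfcont k)) ?_
    intro x hx
    refine hfsupp j ?_
    intro h
    exact hx (by simp [h])
  have hDq_eq : ∀ c, ∫ s in Ioi 1, F c s ^ 2 = c ⬝ᵥ Dm *ᵥ c := by
    intro c
    have h1 : ∀ s, F c s ^ 2 = ∑ j, ∑ k, (c j * c k) * (f j s * f k s) := by
      intro s
      simp only [hF_def, sq, Finset.sum_mul_sum]
      exact Finset.sum_congr rfl fun j _ => Finset.sum_congr rfl fun k _ => by ring
    calc ∫ s in Ioi 1, F c s ^ 2
        = ∑ j, ∑ k, (c j * c k) * ∫ s in Ioi 1, f j s * f k s := by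
          simp_rw [h1]
          rw [integral_finset_sum _ (fun j _ => integrable_finset_sum _
            (fun k _ => ((hff_int j k).const_mul _)))]
          exact Finset.sum_congr rfl fun j _ => by
            rw [integral_finset_sum _ (fun k _ => ((hff_int j k).const_mul _))]
            exact Finset.sum_congr rfl fun k _ => integral_const_mul _ _
      _ = c ⬝ᵥ Dm *ᵥ c := by
          simp only [dotProduct, Matrix.mulVec, hDm_def, Matrix.of_apply,
            Finset.mul_sum]
          exact Finset.sum_congr rfl fun j _ => Finset.sum_congr rfl fun k _ => by ring
  have hexp : ∀ c (r : ℝ), 1 < r → ∀ t : ℝ,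
      0 ≤ (c ⬝ᵥ Dm *ᵥ c) + 2 * U c r * t + Real.log r * t ^ 2 := by
    intro c r hr t
    have h0 : 0 ≤ ∫ s in Ioi 1, (F c s + t * hh r s) ^ 2 :=
      integral_nonneg fun s => sq_nonneg _
    have hptw : ∀ s, (F c s + t * hh r s) ^ 2
        = (F c s ^ 2 + (2 * t) * (F c s * hh r s)) + t ^ 2 * hh r s ^ 2 :=
      fun s => by ring
    simp_rw [hptw] at h0
    have hi1 : IntegrableOn (fun s => (2 * t) * (F c s * hh r s)) (Ioi 1) :=
      (hFh_int c r).const_mul _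
    have hi2 : IntegrableOn (fun s => t ^ 2 * hh r s ^ 2) (Ioi 1) :=
      (hh2_int r).const_mul _
    have hi0 : IntegrableOn (fun s => F c s ^ 2 + (2 * t) * (F c s * hh r s)) (Ioi 1) :=
      (hF2_int c).add hi1
    rw [integral_add hi0 hi2, integral_add (hF2_int c) hi1,
      integral_const_mul, integral_const_mul, hDq_eq c, hFh_val c r hr,
      hh2_val r hr] at h0
    nlinarith [h0]
  have hCS : ∀ c (r : ℝ), 1 < r → (U c r) ^ 2 ≤ Real.log r * (c ⬝ᵥ Dm *ᵥ c) := by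
    intro c r hr
    have hd := discrim_le_zero (a := Real.log r) (b := 2 * U c r) (c := c ⬝ᵥ Dm *ᵥ c)
      (fun x => by nlinarith [hexp c r hr x])
    unfold discrim at hd
    nlinarith [hd]
  have hΦcont : ∀ c, Continuous (Φ c) := by
    intro c
    simp only [hΦ_def]
    exact continuous_finset_sum _ fun j _ => ((hφ j).continuous.const_smul (c j))
  have hptid : ∀ c (r : ℝ), 1 < r →
      deriv (Φ c) r ^ 2 + (-(1 / (4 * r ^ 2)) - V r) * Φ c r ^ 2
        = F c r ^ 2 + deriv (fun x => U c x * U c x / 2) r - V r * Φ c r ^ 2 := by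
    intro c r hr
    have hr0 : (0:ℝ) < r := lt_trans one_pos hr
    have hU' := hUderiv c r hr0
    have hs0 : (0:ℝ) < Real.sqrt r := Real.sqrt_pos.2 hr0
    have hs2 : Real.sqrt r ^ 2 = r := Real.sq_sqrt hr0.le
    have hΦd : deriv (Φ c) r
        = 1 / (2 * Real.sqrt r) * U c r + Real.sqrt r * (∑ j, c j * deriv (u j) r) := by
      have hev : Φ c =ᶠ[nhds r] (fun x => Real.sqrt x * U c x) :=
        Filter.eventually_of_mem (isOpen_Ioi.mem_nhds hr0) (fun x hx => hΦU c x hx)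
      have h1 : HasDerivAt (fun x => Real.sqrt x * U c x)
          (1 / (2 * Real.sqrt r) * U c r
            + Real.sqrt r * (∑ j, c j * deriv (u j) r)) r :=
        (Real.hasDerivAt_sqrt hr0.ne').mul hU'
      exact (h1.congr_of_eventuallyEq hev).deriv
    have hψd : deriv (fun x => U c x * U c x / 2) r
        = U c r * (∑ j, c j * deriv (u j) r) := by
      rw [((hU'.fun_mul hU').div_const 2).deriv]
      ring
    have hFr : F c r = Real.sqrt r * (∑ j, c j * deriv (u j) r) := by
      rw [hFU c r hr0, hU'.deriv]
    rw [hΦd, hψd, hFr, hΦU c r hr0]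
    have hsne : Real.sqrt r ≠ 0 := ne_of_gt hs0
    set a := U c r
    set bb := ∑ j, c j * deriv (u j) r
    set s := Real.sqrt r with hs_def
    rw [← hs2]
    field_simp
    ring
  have hVΦ2_int : ∀ c, IntegrableOn (fun r => V r * Φ c r ^ 2) (Ioi 1) := by
    intro c
    have hmeas : AEStronglyMeasurable (fun r => V r * Φ c r ^ 2)
        (volume.restrict (Ioi 1)) :=
      (hVmeas.aestronglyMeasurable.mul ((hΦcont c).pow 2).aestronglyMeasurable)
    refine Integrable.mono'
      (g := fun r => (c ⬝ᵥ Dm *ᵥ c) * (V r * Real.log r * r))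
      (hVint.const_mul _) hmeas ?_
    rw [ae_restrict_iff' measurableSet_Ioi]
    filter_upwards with r hr
    have hr0 : (0:ℝ) < r := lt_trans one_pos hr
    have h1 : Φ c r ^ 2 = r * U c r ^ 2 := by
      rw [hΦU c r hr0, mul_pow, Real.sq_sqrt hr0.le]
    have h2 := hCS c r hr
    have h3 := hV0 r hr
    rw [Real.norm_eq_abs, abs_of_nonneg (mul_nonneg h3 (sq_nonneg _)), h1]
    have h5 := mul_le_mul_of_nonneg_left h2 (mul_nonneg h3 hr0.le)
    nlinarith [h5]
  have hUUd : ∀ c, (∫ r in Ioi 1, deriv (fun x => U c x * U c x / 2) r) = 0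
      ∧ IntegrableOn (fun r => deriv (fun x => U c x * U c x / 2) r) (Ioi 1) := by
    intro c
    set g : ℝ → ℝ := fun r => U c r * (∑ j, c j * deriv (u j) r) with hg_def
    have hgcont : ContinuousOn g (Ioi 0) := by
      refine ContinuousOn.mul ?_ ?_
      · exact continuousOn_finset_sum _ fun j _ =>
          (continuousOn_const.mul (hucd j).continuousOn)
      · exact continuousOn_finset_sum _ fun j _ => (continuousOn_const.mul (hudc j))
    have hu0K : ∀ x, x ∉ K0 → ∀ j, u j x = 0 := by
      intro x hxK j
      exact hu0 j x (fun h => hxK (mem_iUnion.2 ⟨j, h⟩))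
    have hgsupp : Function.support g ⊆ K0 := by
      intro x hx
      by_contra hxK
      refine hx ?_
      simp [hg_def, hU_def, hu0K x hxK]
    have hgeq : ∀ r ∈ Ioi (0:ℝ), deriv (fun x => U c x * U c x / 2) r = g r := by
      intro r hr
      have hU' := hUderiv c r hr
      rw [((hU'.fun_mul hU').div_const 2).deriv]
      simp only [hg_def]
      ring
    have hgint : IntegrableOn g (Ioi 1) := key_int g hgcont hgsupp
    have h01 : Ioi (1:ℝ) ⊆ Ioi (0:ℝ) := Ioi_subset_Ioi (by norm_num)
    constructor
    · rw [setIntegral_congr_fun measurableSet_Ioi (fun r hr => hgeq r (h01 hr))]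
      obtain ⟨M, hM⟩ := hK0cpt.bddAbove
      set b := max 2 (M + 1) with hb_def
      have hb1 : (1:ℝ) < b := lt_of_lt_of_le one_lt_two (le_max_left _ _)
      have hbK : ∀ x, b ≤ x → x ∉ K0 := by
        intro x hx hxK
        have h1 := hM hxK
        have h2 : M + 1 ≤ b := le_max_right _ _
        linarith
      have hsplit2 : Ioi (1:ℝ) = Ioc 1 b ∪ Ioi b := (Ioc_union_Ioi_eq_Ioi hb1.le).symm
      rw [hsplit2, setIntegral_union (Ioc_disjoint_Ioi le_rfl) measurableSet_Ioi
        (hgint.mono_set (fun x hx => hx.1)) (hgint.mono_set (Ioi_subset_Ioi hb1.le))]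
      have hz2 : ∫ r in Ioi b, g r = 0 := by
        have hzz : ∀ x ∈ Ioi b, g x = 0 := by
          intro x hx
          simp [hg_def, hU_def, hu0K x (hbK x (le_of_lt hx))]
        rw [setIntegral_congr_fun measurableSet_Ioi hzz]
        simp
      have hz1 : ∫ r in Ioc 1 b, g r = 0 := by
        have hgd : ∀ r ∈ Ioc (1:ℝ) b, g r = deriv (fun x => U c x * U c x / 2) r :=
          fun r hr => (hgeq r (lt_trans one_pos hr.1)).symm
        rw [setIntegral_congr_fun measurableSet_Ioc hgd,
          ← intervalIntegral.integral_of_le hb1.le]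
        have hIccsub : Icc (1:ℝ) b ⊆ Ioi 0 := fun x hx => lt_of_lt_of_le one_pos hx.1
        have hdiff : ∀ x ∈ uIcc (1:ℝ) b,
            DifferentiableAt ℝ (fun x => U c x * U c x / 2) x := by
          intro x hx
          rw [uIcc_of_le hb1.le] at hx
          have hx0 : (0:ℝ) < x := hIccsub hx
          exact (((hUderiv c x hx0).mul (hUderiv c x hx0)).div_const 2).differentiableAt
        have hcont : ContinuousOn (deriv (fun x => U c x * U c x / 2)) (uIcc 1 b) := by
          rw [uIcc_of_le hb1.le]
          exact (hgcont.mono hIccsub).congr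
            (fun r hr => hgeq r (hIccsub hr))
        rw [intervalIntegral.integral_deriv_eq_sub hdiff hcont.intervalIntegrable]
        have hUb : U c b = 0 := by
          simp [hU_def, hu0K b (hbK b le_rfl)]
        rw [hUb, hU1 c]
        ring
      rw [hz1, hz2, add_zero]
    · exact hgint.congr_fun (fun x hx => (hgeq x (h01 hx)).symm) measurableSet_Ioi
  have hsplit : ∀ c,
      (∫ r in Ioi 1, (deriv (Φ c) r ^ 2 + (-(1 / (4 * r ^ 2)) - V r) * Φ c r ^ 2))
        = (c ⬝ᵥ Dm *ᵥ c) - ∫ r in Ioi 1, V r * Φ c r ^ 2 := by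
    intro c
    have hcongr : ∀ r ∈ Ioi (1:ℝ),
        deriv (Φ c) r ^ 2 + (-(1 / (4 * r ^ 2)) - V r) * Φ c r ^ 2
          = (F c r ^ 2 + deriv (fun x => U c x * U c x / 2) r) - V r * Φ c r ^ 2 := by
      intro r hr
      rw [hptid c r hr]
    rw [setIntegral_congr_fun measurableSet_Ioi hcongr]
    have hint1 : IntegrableOn
        (fun r => F c r ^ 2 + deriv (fun x => U c x * U c x / 2) r) (Ioi 1) :=
      (hF2_int c).add (hUUd c).2
    rw [integral_sub hint1 (hVΦ2_int c), integral_add (hF2_int c) (hUUd c).2,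
      hDq_eq c, (hUUd c).1, add_zero]
  have hlt : ∀ c, c ≠ 0 → (c ⬝ᵥ Dm *ᵥ c) < ∫ r in Ioi 1, V r * Φ c r ^ 2 := by
    intro c hc
    have h' : (∫ r in Ioi 1,
        (deriv (Φ c) r ^ 2 + (-(1 / (4 * r ^ 2)) - V r) * Φ c r ^ 2)) < 0 := hneg c hc
    rw [hsplit c] at h'
    linarith
  set Bm : Matrix (Fin N) (Fin N) ℝ :=
    Matrix.of (fun j k => ∫ r in Ioi 1, V r * (φ j r * φ k r)) with hBm_def
  have hsingle : ∀ j : Fin N,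
      (Pi.single j 1 : Fin N → ℝ) ⬝ᵥ Dm *ᵥ (Pi.single j 1 : Fin N → ℝ) = Dm j j := by
    intro j
    simp [dotProduct, Matrix.mulVec, Pi.single_apply]
  have hUsingle : ∀ (j : Fin N) (r : ℝ), U (Pi.single j 1) r = u j r := by
    intro j r
    simp [hU_def, Pi.single_apply]
  have hCS1 : ∀ (j : Fin N) (r : ℝ), 1 < r → u j r ^ 2 ≤ Real.log r * Dm j j := by
    intro j r hr
    have h := hCS (Pi.single j 1) r hr
    rwa [hUsingle, hsingle] at h
  have hVφφ_int : ∀ j k, IntegrableOn (fun r => V r * (φ j r * φ k r)) (Ioi 1) := by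
    intro j k
    have hmeas : AEStronglyMeasurable (fun r => V r * (φ j r * φ k r))
        (volume.restrict (Ioi 1)) :=
      hVmeas.aestronglyMeasurable.mul
        (((hφ j).continuous.mul (hφ k).continuous).aestronglyMeasurable)
    refine Integrable.mono'
      (g := fun r => ((Dm j j + Dm k k) / 2) * (V r * Real.log r * r))
      (hVint.const_mul _) hmeas ?_
    rw [ae_restrict_iff' measurableSet_Ioi]
    filter_upwards with r hr
    have hr0 : (0:ℝ) < r := lt_trans one_pos hr
    have hsq : Real.sqrt r ^ 2 = r := Real.sq_sqrt hr0.le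
    have h3 := hV0 r hr
    have hcs1 := hCS1 j r hr
    have hcs2 := hCS1 k r hr
    have hXY : |u j r * u k r| ≤ (u j r ^ 2 + u k r ^ 2) / 2 := by
      rw [abs_mul]
      nlinarith [two_mul_le_add_sq |u j r| |u k r|, sq_abs (u j r), sq_abs (u k r),
        abs_nonneg (u j r), abs_nonneg (u k r)]
    have heq : V r * (φ j r * φ k r) = V r * (r * (u j r * u k r)) := by
      have hss : Real.sqrt r * Real.sqrt r = r := Real.mul_self_sqrt hr0.le
      rw [hφeq j r hr0, hφeq k r hr0]
      linear_combination (V r * u j r * u k r) * hss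
    rw [Real.norm_eq_abs, heq, abs_mul, abs_of_nonneg h3, abs_mul, abs_of_nonneg hr0.le]
    nlinarith [mul_le_mul_of_nonneg_left hXY (mul_nonneg h3 hr0.le),
      mul_le_mul_of_nonneg_left hcs1 (mul_nonneg h3 hr0.le),
      mul_le_mul_of_nonneg_left hcs2 (mul_nonneg h3 hr0.le)]
  have hBq_eq : ∀ c, ∫ r in Ioi 1, V r * Φ c r ^ 2 = c ⬝ᵥ Bm *ᵥ c := by
    intro c
    have h1 : ∀ r, V r * Φ c r ^ 2
        = ∑ j, ∑ k, (c j * c k) * (V r * (φ j r * φ k r)) := by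
      intro r
      have e1 : Φ c r ^ 2 = ∑ j, ∑ k, (c j * φ j r) * (c k * φ k r) := by
        simp only [hΦ_def, sq]
        rw [Finset.sum_mul_sum]
      rw [e1, Finset.mul_sum]
      refine Finset.sum_congr rfl fun j _ => ?_
      rw [Finset.mul_sum]
      refine Finset.sum_congr rfl fun k _ => ?_
      ring
    calc ∫ r in Ioi 1, V r * Φ c r ^ 2
        = ∑ j, ∑ k, (c j * c k) * ∫ r in Ioi 1, V r * (φ j r * φ k r) := by
          simp_rw [h1]
          rw [integral_finset_sum _ (fun j _ => integrable_finset_sum _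
            (fun k _ => ((hVφφ_int j k).const_mul _)))]
          exact Finset.sum_congr rfl fun j _ => by
            rw [integral_finset_sum _ (fun k _ => ((hVφφ_int j k).const_mul _))]
            exact Finset.sum_congr rfl fun k _ => integral_const_mul _ _
      _ = c ⬝ᵥ Bm *ᵥ c := by
          simp only [dotProduct, Matrix.mulVec, hBm_def, Matrix.of_apply,
            Finset.mul_sum]
          refine Finset.sum_congr rfl fun j _ => ?_
          refine Finset.sum_congr rfl fun k _ => ?_
          ring
  have hstar : ∀ x : Fin N → ℝ, star x = x := fun x => funext fun i => star_trivial _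
  have hDmsym : Dm.IsHermitian := by
    show Dmᴴ = Dm
    ext j k
    simp only [Matrix.conjTranspose_apply, hDm_def, Matrix.of_apply, star_trivial]
    exact integral_congr_ae (Filter.Eventually.of_forall (fun s => mul_comm _ _))
  have hBmsym : Bm.IsHermitian := by
    show Bmᴴ = Bm
    ext j k
    simp only [Matrix.conjTranspose_apply, hBm_def, Matrix.of_apply, star_trivial]
    exact integral_congr_ae (Filter.Eventually.of_forall (fun s => by ring))
  have hDmpos : Dm.PosDef := by
    refine Matrix.PosDef.of_dotProduct_mulVec_pos hDmsym ?_
    intro x hx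
    rw [hstar x]
    have h0 : 0 ≤ x ⬝ᵥ Dm *ᵥ x := by
      rw [← hDq_eq x]
      exact integral_nonneg fun s => sq_nonneg _
    rcases h0.lt_or_eq with h | h
    · exact h
    · exfalso
      have hU0 : ∀ r : ℝ, 1 < r → U x r = 0 := by
        intro r hr
        have hcs := hCS x r hr
        rw [← h, mul_zero] at hcs
        have h2 : U x r ^ 2 = 0 := le_antisymm hcs (sq_nonneg _)
        exact (pow_eq_zero_iff (by norm_num : (2:ℕ) ≠ 0)).1 h2
      have hΦ0 : ∀ r ∈ Ioi (1:ℝ), V r * Φ x r ^ 2 = 0 := by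
        intro r hr
        rw [hΦU x r (lt_trans one_pos hr), hU0 r hr]
        ring
      have hint0 : ∫ r in Ioi 1, V r * Φ x r ^ 2 = 0 := by
        rw [setIntegral_congr_fun measurableSet_Ioi hΦ0]
        simp
      have hl := hlt x hx
      rw [hint0, ← h] at hl
      exact lt_irrefl 0 hl
  have hBmDm : (Bm - Dm).PosDef := by
    refine Matrix.PosDef.of_dotProduct_mulVec_pos (hBmsym.sub hDmsym) ?_
    intro x hx
    rw [hstar x, Matrix.sub_mulVec, dotProduct_sub]
    have hl := hlt x hx
    rw [hBq_eq x] at hl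
    linarith
  have hdetDm : IsUnit Dm.det := (Matrix.isUnit_iff_isUnit_det Dm).1 hDmpos.isUnit
  have hBessel : ∀ r : ℝ, 1 < r →
      (fun j => u j r) ⬝ᵥ Dm⁻¹ *ᵥ (fun j => u j r) ≤ Real.log r := by
    intro r hr
    set a : Fin N → ℝ := fun j => u j r with ha_def
    set q : Fin N → ℝ := Dm⁻¹ *ᵥ a with hq_def
    have hDq2 : Dm *ᵥ q = a := by
      rw [hq_def, Matrix.mulVec_mulVec, Matrix.mul_nonsing_inv _ hdetDm,
        Matrix.one_mulVec]
    have hUq : U (-q) r = -(q ⬝ᵥ a) := by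
      simp only [hU_def, dotProduct, ha_def, Pi.neg_apply, neg_mul]
      rw [← Finset.sum_neg_distrib]
    have hquad : (-q) ⬝ᵥ Dm *ᵥ (-q) = q ⬝ᵥ a := by
      rw [Matrix.mulVec_neg, dotProduct_neg, neg_dotProduct, neg_neg,
        hDq2]
    have h := hexp (-q) r hr 1
    rw [hquad, hUq] at h
    rw [dotProduct_comm a q] at *
    linarith [h]
  have htr1 : (N:ℝ) ≤ (Dm⁻¹ * Bm).trace := by
    have h1 : Dm⁻¹ * (Bm - Dm) = Dm⁻¹ * Bm - 1 := by
      rw [Matrix.mul_sub, Matrix.nonsing_inv_mul _ hdetDm]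
    have h2 : 0 ≤ (Dm⁻¹ * (Bm - Dm)).trace := by
      refine aux_trace_nonneg _ _ hDmpos ?_
      intro x
      by_cases hx : x = 0
      · simp [hx]
      · have h3 := hBmDm.dotProduct_mulVec_pos hx
        rw [hstar x] at h3
        linarith
    rw [h1, Matrix.trace_sub, Matrix.trace_one] at h2
    simp only [Fintype.card_fin] at h2
    linarith
  have htr2 : (Dm⁻¹ * Bm).trace ≤ ∫ r in Ioi 1, V r * Real.log r * r := by
    have htr_eq : (Dm⁻¹ * Bm).trace
        = ∫ r in Ioi 1, ∑ j, ∑ k, Dm⁻¹ j k * (V r * (φ k r * φ j r)) := by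
      rw [Matrix.trace,
        integral_finset_sum _ (fun j _ => integrable_finset_sum _
          (fun k _ => (hVφφ_int k j).const_mul (Dm⁻¹ j k)))]
      refine Finset.sum_congr rfl fun j _ => ?_
      rw [Matrix.diag_apply, Matrix.mul_apply,
        integral_finset_sum _ (fun k _ => (hVφφ_int k j).const_mul (Dm⁻¹ j k))]
      refine Finset.sum_congr rfl fun k _ => ?_
      rw [integral_const_mul]
      simp [hBm_def]
    rw [htr_eq]
    refine setIntegral_mono_on (integrable_finset_sum _
      (fun j _ => integrable_finset_sum _ (fun k _ => (hVφφ_int k j).const_mul _)))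
      hVint measurableSet_Ioi ?_
    intro r hr
    have hr0 : (0:ℝ) < r := lt_trans one_pos hr
    have hsq : Real.sqrt r ^ 2 = r := Real.sq_sqrt hr0.le
    have h3 := hV0 r hr
    have hXle := hBessel r hr
    have hsum_eq : ∑ j, ∑ k, Dm⁻¹ j k * (V r * (φ k r * φ j r))
        = (V r * r) * ((fun j => u j r) ⬝ᵥ Dm⁻¹ *ᵥ (fun j => u j r)) := by
      simp only [dotProduct, Matrix.mulVec, Finset.mul_sum]
      refine Finset.sum_congr rfl fun j _ => Finset.sum_congr rfl fun k _ => ?_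
      have hss : Real.sqrt r * Real.sqrt r = r := Real.mul_self_sqrt hr0.le
      rw [hφeq k r hr0, hφeq j r hr0]
      linear_combination (Dm⁻¹ j k * V r * u j r * u k r) * hss
    rw [hsum_eq]
    have h6 := mul_le_mul_of_nonneg_left hXle (mul_nonneg h3 hr0.le)
    nlinarith [h6]
  linarith [htr1, htr2]
end
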